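/- arXiv:1509.07019 — 5 statements merged into one kernel-verified Lean document; each statement's English description precedes it below -/
import Mathlib

section
/- In the random intersection graph G(n,m,F) with m = ⌊βn^α⌋ and p_i = min(γ W_i n^{-(1+α)/2}, 1), if the weight distribution F has finite mean (normalized to 1), then for every α > 0 the conditional expected degree of vertex i given its weight satisfies E[D_i | W_i] → βγ²W_i as n → ∞. -/
open MeasureTheory ProbabilityTheory Filter Real

noncomputable section

/-- Bernoulli measure on `Bool` with success probability `p` (clamped into `[0,1]`). -/
def bern (p : ℝ) : Measure Bool :=
  (PMF.bernoulli (Real.toNNReal (min p 1))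
    (Real.toNNReal_le_one.mpr (min_le_right _ _))).toMeasure

instance bern.isProbabilityMeasure (p : ℝ) : IsProbabilityMeasure (bern p) := by
  unfold bern; infer_instance

/-- The (conditional) law of the bipartite graph `B(n,m,·)` given the group-membership
probabilities `p i` of the `n` vertices: vertex `i` is joined to each of the `m` groups
independently with probability `p i`. -/
def bipLaw (n m : ℕ) (p : Fin n → ℝ) : Measure (Fin n → Fin m → Bool) :=
  Measure.pi fun i => Measure.pi fun _ : Fin m => bern (p i)

instance bipLaw.isProbabilityMeasure (n m : ℕ) (p : Fin n → ℝ) :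
    IsProbabilityMeasure (bipLaw n m p) := by
  unfold bipLaw; infer_instance

/-- The number of groups, `m = ⌊β n^α⌋`. -/
def numGroups (β α : ℝ) (n : ℕ) : ℕ := ⌊β * (n : ℝ) ^ α⌋₊

/-- The group-membership probability `p_i = min(γ w n^{-(1+α)/2}, 1)` of a vertex
with weight `w`. -/
def pw (γ α : ℝ) (n : ℕ) (w : ℝ) : ℝ := min (γ * w * (n : ℝ) ^ (-(1 + α) / 2)) 1

/-- Two distinct vertices are adjacent in the random intersection graph iff they share
at least one group in the bipartite graph. -/
def Adj {n m : ℕ} (B : Fin n → Fin m → Bool) (i j : Fin n) : Prop :=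
  ∃ a : Fin m, B i a ∧ B j a

/-- The degree of vertex `i` in the random intersection graph determined by the
bipartite graph `B`. -/
def deg {n m : ℕ} (B : Fin n → Fin m → Bool) (i : Fin n) : ℕ :=
  Set.ncard {j | j ≠ i ∧ Adj B i j}

/-- The expected degree of vertex `0` in `G(n,m,F)`, conditional on its weight being `w`;
the weights of the remaining vertices are i.i.d. with law `F`. -/
def condExpDeg (α β γ : ℝ) (F : Measure ℝ) (n : ℕ) (w : ℝ) : ℝ :=
  if h : n ≠ 0 then
    haveI : NeZero n := ⟨h⟩
    ∫ v : Fin n → ℝ,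
      (∫ B, (deg B 0 : ℝ)
        ∂ bipLaw n (numGroups β α n) fun i => pw γ α n (if i = 0 then w else v i))
      ∂ Measure.pi fun _ : Fin n => F
  else 0

/-!
Conditionally on all weights, vertices `i ≠ j` are adjacent unless none of the `m` groups
contains both, which happens with probability `(1 - p_i p_j)^m`. Averaging over the i.i.d.
weights of the other `n - 1` vertices gives
`E[D | W = w] = (n - 1) ∫ (1 - (1 - p(w) p(x))^m) dF(x)`.
For large `n` we have `p(w) p(x) = γ² w x n^{-(1+α)}` and `m ~ β n^α`, so with `t = p(w) p(x)`
the squeeze `n m t - n (m t)² / 2 ≤ n (1 - (1 - t)^m) ≤ n m t` gives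
`n (1 - (1 - t)^m) → β γ² w x`. The bound `n m t ≤ β γ² w x` is integrable because `F` has
finite mean, so dominated convergence applies.
-/

namespace RandomIntersectionGraph

open Finset Topology

def bernProb (p : ℝ) : ℝ := max (min p 1) 0

lemma bernProb_nonneg (p : ℝ) : 0 ≤ bernProb p := le_max_right _ _

lemma bernProb_le_one (p : ℝ) : bernProb p ≤ 1 := max_le (min_le_right _ _) zero_le_one

lemma bernProb_le {p : ℝ} (hp : 0 ≤ p) : bernProb p ≤ p := max_le (min_le_left _ _) hp

lemma bernProb_of_mem_Icc {p : ℝ} (h0 : 0 ≤ p) (h1 : p ≤ 1) : bernProb p = p := by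
  rw [bernProb, min_eq_left h1, max_eq_left h0]

lemma integral_cond_bern (p : ℝ) : ∫ b, cond b (1 : ℝ) 0 ∂bern p = bernProb p := by
  rw [bern, PMF.bernoulli_expectation, Real.coe_toNNReal']
  rfl

lemma integral_finset_prod_eval {ι : Type*} [Fintype ι] [DecidableEq ι] {X : ι → Type*}
    [∀ i, MeasurableSpace (X i)] (μ : ∀ i, Measure (X i)) [∀ i, IsProbabilityMeasure (μ i)]
    (s : Finset ι) (f : ∀ i, X i → ℝ) :
    ∫ x, ∏ i ∈ s, f i (x i) ∂Measure.pi μ = ∏ i ∈ s, ∫ y, f i y ∂μ i := by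
  have hextend (g : ∀ i, X i → ℝ) (x : ∀ i, X i) :
      ∏ i ∈ s, g i (x i) = ∏ i, if i ∈ s then g i (x i) else 1 := by
    rw [prod_ite_mem, univ_inter]
  simp_rw [hextend f, integral_fintype_prod_eq_prod (fun i y => if i ∈ s then f i y else 1)]
  calc _ = ∏ i, if i ∈ s then ∫ y, f i y ∂μ i else 1 :=
        prod_congr rfl fun i _ => by split_ifs <;> simp
    _ = _ := by rw [prod_ite_mem, univ_inter]

lemma measurePreserving_swap_pi {ι κ α : Type*} [Fintype ι] [Fintype κ] [MeasurableSpace α]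
    [Countable α] [MeasurableSingletonClass α] (μ : ι → κ → Measure α)
    [∀ i k, SigmaFinite (μ i k)] :
    MeasurePreserving (Function.swap : (ι → κ → α) → κ → ι → α)
      (Measure.pi fun i => Measure.pi (μ i)) (Measure.pi fun k => Measure.pi fun i => μ i k) where
  measurable := .of_discrete
  map_eq := Measure.ext_of_singleton fun C => by
    rw [Measure.map_apply .of_discrete (measurableSet_singleton C),
      show Function.swap ⁻¹' {C} = {Function.swap C} from
        Set.ext fun B => by simp [eq_comm, funext_iff, Function.swap, forall_comm (α := ι)]]
    simp only [Measure.pi_singleton]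
    exact prod_comm

open scoped Classical in
lemma ite_adj_eq_one_sub_prod {n m : ℕ} (B : Fin n → Fin m → Bool) (i j : Fin n) :
    (if Adj B i j then (1 : ℝ) else 0)
      = 1 - ∏ a, (1 - cond (B i a) (1 : ℝ) 0 * cond (B j a) 1 0) := by
  by_cases h : Adj B i j
  · obtain ⟨a, hi, hj⟩ := h
    rw [if_pos ⟨a, hi, hj⟩, prod_eq_zero (mem_univ a) (by simp [hi, hj])]
    ring
  · rw [if_neg h, prod_eq_one fun a _ => ?_]
    · ring
    · cases hi : B i a <;> cases hj : B j a <;> simp_all [Adj]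

open scoped Classical in
lemma integral_ite_adj {n m : ℕ} (q : Fin n → ℝ) {i j : Fin n} (hij : i ≠ j) :
    ∫ B, (if Adj B i j then (1 : ℝ) else 0) ∂bipLaw n m q
      = 1 - (1 - bernProb (q i) * bernProb (q j)) ^ m := by
  set column : Measure (Fin n → Bool) := Measure.pi fun k => bern (q k)
  have hcolumn : ∫ c, (1 - cond (c i) (1 : ℝ) 0 * cond (c j) 1 0) ∂column
      = 1 - bernProb (q i) * bernProb (q j) := by
    have hpair := integral_finset_prod_eval (fun k => bern (q k)) {i, j}
      (fun _ b => cond b (1 : ℝ) 0)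
    simp only [prod_pair hij, integral_cond_bern] at hpair
    rw [integral_sub (integrable_const 1) .of_finite, integral_const, probReal_univ, one_smul,
      hpair]
  have hcolumns : ∫ C, ∏ a, (1 - cond (C a i) (1 : ℝ) 0 * cond (C a j) 1 0)
      ∂Measure.pi (fun _ : Fin m => column) = (1 - bernProb (q i) * bernProb (q j)) ^ m := by
    rw [integral_fintype_prod_eq_pow
      fun c : Fin n → Bool => 1 - cond (c i) (1 : ℝ) 0 * cond (c j) 1 0, hcolumn, Fintype.card_fin]
  -- Transposed, `B` is a family of `m` independent columns, each distributed as `column`.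
  rw [← (measurePreserving_swap_pi fun k (_ : Fin m) => bern (q k)).map_eq,
    integral_map .of_discrete .of_discrete] at hcolumns
  simp_rw [ite_adj_eq_one_sub_prod]
  rw [integral_sub (integrable_const 1) .of_finite, integral_const, probReal_univ, one_smul,
    bipLaw, ← hcolumns]

open scoped Classical in
lemma deg_eq_sum {n m : ℕ} (B : Fin n → Fin m → Bool) (i : Fin n) :
    (deg B i : ℝ) = ∑ j ∈ univ.erase i, if Adj B i j then (1 : ℝ) else 0 := by
  have hset : {j | j ≠ i ∧ Adj B i j}.toFinset = (univ.erase i).filter (Adj B i) := by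
    ext j
    simp
  rw [deg, Set.ncard_eq_toFinset_card', hset, card_filter]
  push_cast
  rfl

lemma integral_deg {n m : ℕ} (q : Fin n → ℝ) (i : Fin n) :
    ∫ B, (deg B i : ℝ) ∂bipLaw n m q
      = ∑ j ∈ univ.erase i, (1 - (1 - bernProb (q i) * bernProb (q j)) ^ m) := by
  classical
  simp_rw [deg_eq_sum]
  rw [integral_finsetSum _ fun j _ => .of_finite]
  exact sum_congr rfl fun j hj => integral_ite_adj q (mem_erase.mp hj).1.symm

def adjProb (α β γ : ℝ) (n : ℕ) (w x : ℝ) : ℝ :=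
  1 - (1 - bernProb (pw γ α n w) * bernProb (pw γ α n x)) ^ numGroups β α n

lemma one_sub_one_sub_pow_mem_Icc {t : ℝ} (h0 : 0 ≤ t) (h1 : t ≤ 1) (m : ℕ) :
    1 - (1 - t) ^ m ∈ Set.Icc 0 1 := by
  have := pow_le_one₀ (sub_nonneg.mpr h1) (sub_le_self 1 h0) (n := m)
  have := pow_nonneg (sub_nonneg.mpr h1) m
  constructor <;> linarith

lemma adjProb_mem_Icc (α β γ : ℝ) (n : ℕ) (w x : ℝ) : adjProb α β γ n w x ∈ Set.Icc 0 1 :=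
  one_sub_one_sub_pow_mem_Icc (mul_nonneg (bernProb_nonneg _) (bernProb_nonneg _))
    (mul_le_one₀ (bernProb_le_one _) (bernProb_nonneg _) (bernProb_le_one _)) _

lemma measurable_adjProb (α β γ : ℝ) (n : ℕ) (w : ℝ) : Measurable (adjProb α β γ n w) := by
  unfold adjProb bernProb pw
  fun_prop

lemma condExpDeg_eq (α β γ : ℝ) (F : Measure ℝ) [IsProbabilityMeasure F] {n : ℕ} (hn : n ≠ 0)
    (w : ℝ) : condExpDeg α β γ F n w = ((n : ℝ) - 1) * ∫ x, adjProb α β γ n w x ∂F := by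
  have : NeZero n := ⟨hn⟩
  have hint : Integrable (adjProb α β γ n w) F :=
    .of_bound (measurable_adjProb α β γ n w).aestronglyMeasurable 1 <| ae_of_all _ fun x => by
      rw [Real.norm_of_nonneg (adjProb_mem_Icc α β γ n w x).1]
      exact (adjProb_mem_Icc α β γ n w x).2
  have hdeg (v : Fin n → ℝ) :
      ∫ B, (deg B 0 : ℝ) ∂bipLaw n (numGroups β α n)
          (fun i => pw γ α n (if i = 0 then w else v i))
        = ∑ j ∈ univ.erase 0, adjProb α β γ n w (v j) := by
    rw [integral_deg]
    exact sum_congr rfl fun j hj => by simp [adjProb, (mem_erase.mp hj).1]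
  have hcoord (j : Fin n) :
      ∫ v, adjProb α β γ n w (v j) ∂Measure.pi (fun _ => F) = ∫ x, adjProb α β γ n w x ∂F :=
    integral_comp_eval hint.aestronglyMeasurable
  rw [condExpDeg, dif_pos hn]
  simp_rw [hdeg]
  rw [integral_finsetSum _ fun j _ => integrable_comp_eval hint, sum_congr rfl fun j _ => hcoord j,
    sum_const, card_erase_of_mem (mem_univ 0), card_fin, nsmul_eq_mul,
    Nat.cast_pred (Nat.pos_of_ne_zero hn)]

lemma one_sub_pow_le {t : ℝ} (h0 : 0 ≤ t) (h1 : t ≤ 1) (m : ℕ) :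
    (1 - t) ^ m ≤ 1 - m * t + (m * t) ^ 2 / 2 := by
  induction m with
  | zero => norm_num
  | succ k ih =>
    have hk : (0 : ℝ) ≤ k := Nat.cast_nonneg k
    calc (1 - t) ^ (k + 1) = (1 - t) ^ k * (1 - t) := pow_succ _ _
      _ ≤ (1 - k * t + (k * t) ^ 2 / 2) * (1 - t) :=
          mul_le_mul_of_nonneg_right ih (sub_nonneg.mpr h1)
      _ ≤ 1 - (k + 1 : ℕ) * t + ((k + 1 : ℕ) * t) ^ 2 / 2 := by
          push_cast
          nlinarith [sq_nonneg t, sq_nonneg (k * t),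
            mul_nonneg (mul_nonneg hk hk) (pow_nonneg h0 3)]

lemma one_sub_one_sub_pow_le {t : ℝ} (h1 : t ≤ 1) (m : ℕ) : 1 - (1 - t) ^ m ≤ m * t := by
  have := one_add_mul_le_pow (a := -t) (by linarith) m
  rw [← sub_eq_add_neg] at this
  linarith

lemma tendsto_mul_one_sub_one_sub_pow {ι : Type*} {l : Filter ι} {u t : ι → ℝ} {m : ι → ℕ}
    {L : ℝ} (hu : ∀ k, 0 ≤ u k) (ht0 : ∀ k, 0 ≤ t k) (ht1 : ∀ k, t k ≤ 1)
    (hL : Tendsto (fun k => u k * (m k * t k)) l (𝓝 L))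
    (hsmall : Tendsto (fun k => (m k : ℝ) * t k) l (𝓝 0)) :
    Tendsto (fun k => u k * (1 - (1 - t k) ^ m k)) l (𝓝 L) := by
  have hlower : Tendsto (fun k => u k * (m k * t k) - u k * (m k * t k) * (m k * t k) / 2) l
      (𝓝 L) := by
    simpa using hL.sub ((hL.mul hsmall).div_const 2)
  refine tendsto_of_tendsto_of_tendsto_of_le_of_le hlower hL (fun k => ?_) (fun k => ?_)
  · have := one_sub_pow_le (ht0 k) (ht1 k) (m k)
    have := mul_le_mul_of_nonneg_left (a := u k)
      (show m k * t k - (m k * t k) ^ 2 / 2 ≤ 1 - (1 - t k) ^ m k by linarith) (hu k)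
    linarith
  · exact mul_le_mul_of_nonneg_left (one_sub_one_sub_pow_le (ht1 k) (m k)) (hu k)

lemma mul_rpow_neg_one_add_div_two_sq {x : ℝ} (hx : 0 < x) (α : ℝ) :
    x * (x ^ (-(1 + α) / 2)) ^ 2 = x ^ (-α) := by
  calc x * (x ^ (-(1 + α) / 2)) ^ 2 = x ^ (1 : ℝ) * x ^ (-(1 + α) / 2 * 2) := by
        rw [Real.rpow_one, ← Real.rpow_natCast, ← Real.rpow_mul hx.le, Nat.cast_ofNat]
    _ = x ^ (-α) := by
        rw [← Real.rpow_add hx]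
        ring_nf

lemma numGroups_mul_rpow_neg_le {β : ℝ} (hβ : 0 ≤ β) (α : ℝ) {n : ℕ} (hn : n ≠ 0) :
    numGroups β α n * (n : ℝ) ^ (-α) ≤ β := by
  have hn' : (0 : ℝ) < n := by positivity
  calc numGroups β α n * (n : ℝ) ^ (-α) ≤ β * (n : ℝ) ^ α * (n : ℝ) ^ (-α) := by
        gcongr
        exact Nat.floor_le (by positivity)
    _ = β := by rw [mul_assoc, ← Real.rpow_add hn', add_neg_cancel, Real.rpow_zero, mul_one]

lemma tendsto_numGroups_mul_rpow_neg {α β : ℝ} (hα : 0 < α) (hβ : 0 < β) :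
    Tendsto (fun n : ℕ => numGroups β α n * (n : ℝ) ^ (-α)) atTop (𝓝 β) := by
  have hgrow : Tendsto (fun n : ℕ => β * (n : ℝ) ^ α) atTop atTop :=
    ((tendsto_rpow_atTop hα).comp tendsto_natCast_atTop_atTop).const_mul_atTop hβ
  have hlim := (tendsto_nat_floor_div_atTop.comp hgrow).mul_const β
  rw [one_mul] at hlim
  refine hlim.congr' ?_
  filter_upwards [eventually_ne_atTop 0] with n hn
  have hn' : (0 : ℝ) < n := by positivity
  rw [Function.comp_apply, numGroups, Real.rpow_neg hn'.le]
  field_simp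

lemma bernProb_pw_le {γ w : ℝ} (hγ : 0 ≤ γ) (hw : 0 ≤ w) (α : ℝ) (n : ℕ) :
    bernProb (pw γ α n w) ≤ γ * w * (n : ℝ) ^ (-(1 + α) / 2) :=
  (bernProb_le (le_min (by positivity) zero_le_one)).trans (min_le_left _ _)

lemma eventually_bernProb_pw_eq {γ w α : ℝ} (hγ : 0 ≤ γ) (hw : 0 ≤ w) (hα : -1 < α) :
    ∀ᶠ n : ℕ in atTop, bernProb (pw γ α n w) = γ * w * (n : ℝ) ^ (-(1 + α) / 2) := by
  have hdecay : Tendsto (fun n : ℕ => γ * w * (n : ℝ) ^ (-(1 + α) / 2)) atTop (𝓝 0) := by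
    rw [neg_div, ← mul_zero (γ * w)]
    exact ((tendsto_rpow_neg_atTop (y := (1 + α) / 2) (by linarith)).comp
      tendsto_natCast_atTop_atTop).const_mul _
  filter_upwards [hdecay.eventually_le_const zero_lt_one] with n hn
  rw [pw, min_eq_left hn, bernProb_of_mem_Icc (by positivity) hn]

lemma natCast_mul_numGroups_mul_eq (α β γ w x : ℝ) {n : ℕ} (hn : n ≠ 0) :
    (n : ℝ) * (numGroups β α n *
        (γ * w * (n : ℝ) ^ (-(1 + α) / 2) * (γ * x * (n : ℝ) ^ (-(1 + α) / 2))))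
      = γ ^ 2 * w * x * (numGroups β α n * (n : ℝ) ^ (-α)) := by
  rw [← mul_rpow_neg_one_add_div_two_sq (by positivity : (0 : ℝ) < n) α]
  ring

lemma mul_adjProb_le {α β γ w x : ℝ} (hβ : 0 ≤ β) (hγ : 0 ≤ γ) (hw : 0 ≤ w) (hx : 0 ≤ x)
    {n : ℕ} (hn : n ≠ 0) : n * adjProb α β γ n w x ≤ β * γ ^ 2 * w * x := by
  calc n * adjProb α β γ n w x
      ≤ n * (numGroups β α n * (bernProb (pw γ α n w) * bernProb (pw γ α n x))) := by
        gcongr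
        exact one_sub_one_sub_pow_le
          (mul_le_one₀ (bernProb_le_one _) (bernProb_nonneg _) (bernProb_le_one _)) _
    _ ≤ n * (numGroups β α n *
          (γ * w * (n : ℝ) ^ (-(1 + α) / 2) * (γ * x * (n : ℝ) ^ (-(1 + α) / 2)))) := by
        gcongr
        · exact bernProb_nonneg _
        · exact bernProb_pw_le hγ hw α n
        · exact bernProb_pw_le hγ hx α n
    _ = γ ^ 2 * w * x * (numGroups β α n * (n : ℝ) ^ (-α)) :=
        natCast_mul_numGroups_mul_eq α β γ w x hn
    _ ≤ γ ^ 2 * w * x * β := by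
        gcongr
        exact numGroups_mul_rpow_neg_le hβ α hn
    _ = β * γ ^ 2 * w * x := by ring

lemma tendsto_mul_adjProb {α β γ w x : ℝ} (hα : 0 < α) (hβ : 0 < β) (hγ : 0 ≤ γ) (hw : 0 ≤ w)
    (hx : 0 ≤ x) :
    Tendsto (fun n : ℕ => n * adjProb α β γ n w x) atTop (𝓝 (β * γ ^ 2 * w * x)) := by
  have hscaled : Tendsto (fun n : ℕ => (n : ℝ) * (numGroups β α n *
      (bernProb (pw γ α n w) * bernProb (pw γ α n x)))) atTop (𝓝 (β * γ ^ 2 * w * x)) := by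
    have hlim := (tendsto_numGroups_mul_rpow_neg hα hβ).const_mul (γ ^ 2 * w * x)
    rw [show γ ^ 2 * w * x * β = β * γ ^ 2 * w * x by ring] at hlim
    refine hlim.congr' ?_
    filter_upwards [eventually_ne_atTop 0, eventually_bernProb_pw_eq (α := α) hγ hw (by linarith),
      eventually_bernProb_pw_eq (α := α) hγ hx (by linarith)] with n hn hpw hpx
    rw [hpw, hpx, natCast_mul_numGroups_mul_eq α β γ w x hn]
  refine tendsto_mul_one_sub_one_sub_pow (fun n => n.cast_nonneg)
    (fun n => mul_nonneg (bernProb_nonneg _) (bernProb_nonneg _))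
    (fun n => mul_le_one₀ (bernProb_le_one _) (bernProb_nonneg _) (bernProb_le_one _)) hscaled ?_
  refine (hscaled.div_atTop tendsto_natCast_atTop_atTop).congr' ?_
  filter_upwards [eventually_ne_atTop 0] with n hn
  field_simp

lemma tendsto_integral_mul_adjProb {α β γ w : ℝ} (hα : 0 < α) (hβ : 0 < β) (hγ : 0 ≤ γ)
    (hw : 0 ≤ w) {F : Measure ℝ} (hF : ∀ᵐ x ∂F, 0 ≤ x) (hFint : Integrable (fun x => x) F) :
    Tendsto (fun n : ℕ => ∫ x, n * adjProb α β γ n w x ∂F) atTop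
      (𝓝 (β * γ ^ 2 * w * ∫ x, x ∂F)) := by
  rw [← integral_const_mul]
  refine tendsto_integral_filter_of_dominated_convergence (fun x => β * γ ^ 2 * w * x)
    (.of_forall fun n => ((measurable_adjProb α β γ n w).const_mul _).aestronglyMeasurable)
    ?_ (hFint.const_mul (β * γ ^ 2 * w)) ?_
  · filter_upwards [eventually_ne_atTop 0] with n hn
    filter_upwards [hF] with x hx
    rw [Real.norm_of_nonneg (mul_nonneg n.cast_nonneg (adjProb_mem_Icc α β γ n w x).1)]
    exact mul_adjProb_le hβ.le hγ hw hx hn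
  · filter_upwards [hF] with x hx
    exact tendsto_mul_adjProb hα hβ hγ hw hx

end RandomIntersectionGraph

open RandomIntersectionGraph

/-- In the random intersection graph `G(n,m,F)` with `m = ⌊β n^α⌋` and
`p_i = min(γ W_i n^{-(1+α)/2}, 1)`, if the weight distribution `F` has finite mean
(normalized to `1`), then for every `α > 0` the conditional expected degree of a vertex
given its weight satisfies `E[D_i | W_i = w] → β γ² w` as `n → ∞`. -/
theorem conditional_expected_degree (α β γ : ℝ) (hα : 0 < α) (hβ : 0 < β) (hγ : 0 < γ)
    (F : Measure ℝ) [IsProbabilityMeasure F]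
    (hFpos : F (Set.Iic 0) = 0)
    (hFint : Integrable (fun x => x) F) (hFmean : ∫ x, x ∂F = 1) :
    ∀ w : ℝ, 0 < w →
      Tendsto (fun n => condExpDeg α β γ F n w) atTop (nhds (β * γ ^ 2 * w)) := by
  intro w hw
  have hF : ∀ᵐ x ∂F, 0 ≤ x :=
    ae_iff.mpr <| measure_mono_null (fun x hx => Set.mem_Iic.mpr (not_le.mp hx).le) hFpos
  have hratio : Tendsto (fun n : ℕ => 1 - 1 / (n : ℝ)) atTop (nhds 1) := by
    simpa using (tendsto_const_nhds (x := (1 : ℝ))).sub tendsto_one_div_atTop_nhds_zero_nat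
  have hlim := hratio.mul (tendsto_integral_mul_adjProb hα hβ hγ.le hw.le hF hFint)
  rw [hFmean, mul_one, one_mul] at hlim
  refine hlim.congr' ?_
  filter_upwards [eventually_ne_atTop 0] with n hn
  rw [condExpDeg_eq α β γ F hn, integral_const_mul]
  field_simp
end
end

section
/- In the random intersection graph G(n,m,F) with m = ⌊βn^α⌋ and p_i = min(γ W_i n^{-(1+α)/2}, 1), if F has finite mean and α < 1, then for any three distinct vertices i, j, k the conditional clustering coefficient c̄_{i,j,k}^{(n)} = P̄_n(E_{ij} | E_{ik}, E_{jk}) converges to 1 in probability as n → ∞. -/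
open MeasureTheory ProbabilityTheory Filter Real

noncomputable section

/-- The conditional (on the weights) clustering coefficient
`c̄_{i,j,k}^{(n)} = P̄_n(E_{ij} | E_{ik}, E_{jk})` for the three distinct vertices
`i = 0`, `j = 1`, `k = 2` of `G(n,m,F)`, as a function of the weight sequence `v`:
the ratio `P̄_n(E_{ij} ∩ E_{ik} ∩ E_{jk}) / P̄_n(E_{ik} ∩ E_{jk})`. -/
def clusterRatio (α β γ : ℝ) (n : ℕ) (v : ℕ → ℝ) : ℝ :=
  if h : 3 ≤ n then
    ((bipLaw n (numGroups β α n) fun l => pw γ α n (v l))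
        {B | Adj B ⟨0, by omega⟩ ⟨1, by omega⟩ ∧ Adj B ⟨0, by omega⟩ ⟨2, by omega⟩ ∧
             Adj B ⟨1, by omega⟩ ⟨2, by omega⟩}).toReal /
    ((bipLaw n (numGroups β α n) fun l => pw γ α n (v l))
        {B | Adj B ⟨0, by omega⟩ ⟨2, by omega⟩ ∧ Adj B ⟨1, by omega⟩ ⟨2, by omega⟩}).toReal
  else 0

/-! Conditionally on the weights, write `t = p_i p_j p_k`. The event `E_ij ∩ E_ik ∩ E_jk`
contains the union over groups `a` of the events "`a` is a common group of `i`, `j`, `k`",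
each of probability `t`, so by the Bonferroni inequality it has probability at least
`m t - (m t)^2`. The event `E_ik ∩ E_jk` is covered by the same union together with the events
"`i`, `k` share the group `a` and `j`, `k` share another group `b`", of total probability at
most `m^2 t p_k`. Hence `|c̄ - 1| ≤ 4 m p_k` once `m p_k ≤ 1/2`, and
`m p_k ≤ β γ W_k n^{(α - 1)/2}` tends to `0` in probability because `α < 1`. -/

open Finset in
theorem Finset.card_le_one_add_card_offDiag {α : Type*} [DecidableEq α] (s : Finset α) :
    #s ≤ 1 + #s.offDiag := by
  rcases s.eq_empty_or_nonempty with rfl | ⟨a, ha⟩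
  · simp
  · calc #s = 1 + #(s.erase a) := by rw [add_comm, card_erase_add_one ha]
      _ ≤ 1 + #s.offDiag := by
        gcongr
        exact card_le_card_of_injOn (fun b => (a, b))
          (fun b hb => by simp_all [Ne.symm (ne_of_mem_erase hb)])
          (fun b _ c _ h => (Prod.ext_iff.1 h).2)

open Finset in
theorem Finset.card_offDiag_le_sq {α : Type*} [DecidableEq α] (s : Finset α) :
    #s.offDiag ≤ #s ^ 2 := by
  rw [offDiag_card, sq]
  exact Nat.sub_le _ _

open Finset in
theorem sum_indicator_le_indicator_iUnion_add_sum_offDiag {X ι : Type*} [Fintype ι]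
    [DecidableEq ι] (T : ι → Set X) (x : X) :
    ∑ a, (T a).indicator (1 : X → ℝ) x ≤
      (⋃ a, T a).indicator 1 x + ∑ q ∈ univ.offDiag, (T q.1 ∩ T q.2).indicator 1 x := by
  classical
  simp only [Set.indicator_apply, Pi.one_apply, sum_boole]
  set k := univ.filter fun a => x ∈ T a
  have hk : univ.offDiag.filter (fun q : ι × ι => x ∈ T q.1 ∩ T q.2) = k.offDiag := by
    ext q
    simp only [Set.mem_inter_iff, mem_filter, mem_offDiag, mem_univ, ne_eq, true_and, k]
    tauto
  rw [hk]
  by_cases hx : x ∈ ⋃ a, T a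
  · rw [if_pos hx]; exact_mod_cast k.card_le_one_add_card_offDiag
  · have : k = ∅ := filter_eq_empty_iff.2 fun a _ hxa => hx (Set.mem_iUnion_of_mem a hxa)
    simp [this, hx]

open Finset in
theorem sum_measureReal_sub_le_measureReal_iUnion {X ι : Type*} [MeasurableSpace X]
    {μ : Measure X} [IsFiniteMeasure μ] [Fintype ι] [DecidableEq ι] {T : ι → Set X}
    (hT : ∀ a, MeasurableSet (T a)) :
    ∑ a, μ.real (T a) - ∑ q ∈ univ.offDiag, μ.real (T q.1 ∩ T q.2) ≤ μ.real (⋃ a, T a) := by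
  have hint {s : Set X} (hs : MeasurableSet s) : Integrable (s.indicator (1 : X → ℝ)) μ :=
    (integrable_const 1).indicator hs
  have hpair (q : ι × ι) : MeasurableSet (T q.1 ∩ T q.2) := (hT q.1).inter (hT q.2)
  calc ∑ a, μ.real (T a) - ∑ q ∈ univ.offDiag, μ.real (T q.1 ∩ T q.2)
      = ∫ x, ∑ a, (T a).indicator 1 x ∂μ
          - ∫ x, ∑ q ∈ univ.offDiag, (T q.1 ∩ T q.2).indicator 1 x ∂μ := by
        rw [integral_finsetSum _ fun a _ => hint (hT a),
          integral_finsetSum _ fun q _ => hint (hpair q)]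
        simp only [integral_indicator_one (hT _), integral_indicator_one (hpair _)]
    _ ≤ ∫ x, (⋃ a, T a).indicator 1 x ∂μ := by
        rw [sub_le_iff_le_add, ← integral_add (hint (.iUnion hT))
          (integrable_finsetSum _ fun q _ => hint (hpair q))]
        exact integral_mono (integrable_finsetSum _ fun a _ => hint (hT a))
          ((hint (.iUnion hT)).add (integrable_finsetSum _ fun q _ => hint (hpair q)))
          (sum_indicator_le_indicator_iUnion_add_sum_offDiag T)
    _ = μ.real (⋃ a, T a) := integral_indicator_one (.iUnion hT)

theorem abs_div_sub_one_le_four_mul {N D a b : ℝ} (ha : 0 < a) (hab : a ≤ b) (hb : b ≤ 1 / 2)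
    (hN : a - a ^ 2 ≤ N) (hD : D ≤ a + a * b) (hND : N ≤ D) : |N / D - 1| ≤ 4 * b := by
  have hN2 : a / 2 ≤ N := by nlinarith
  have hD0 : 0 < D := by linarith
  rw [abs_sub_comm, abs_of_nonneg (by rw [sub_nonneg, div_le_one hD0]; exact hND),
    one_sub_div hD0.ne', div_le_iff₀ hD0]
  nlinarith [mul_le_mul_of_nonneg_left hab ha.le, mul_le_mul_of_nonneg_left (hN2.trans hND)
    (by linarith : (0 : ℝ) ≤ 4 * b)]

theorem bern_singleton_true {q : ℝ} (hq : q ≤ 1) : bern q {true} = ENNReal.ofReal q := by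
  rw [bern, PMF.toMeasure_apply_singleton _ _ (measurableSet_singleton _), PMF.bernoulli_apply]
  simp [min_eq_left hq, ENNReal.ofReal]

section BipartiteGraph

open Finset

variable {n m : ℕ}

def containsEdges (s : Finset (Fin n × Fin m)) : Set (Fin n → Fin m → Bool) :=
  {B | ∀ q ∈ s, B q.1 q.2 = true}

theorem measurableSet_containsEdges (s : Finset (Fin n × Fin m)) :
    MeasurableSet (containsEdges s) :=
  (Set.toFinite _).measurableSet

theorem containsEdges_inter_containsEdges (s t : Finset (Fin n × Fin m)) :
    containsEdges s ∩ containsEdges t = containsEdges (s ∪ t) := by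
  ext B
  simp only [containsEdges, Set.mem_inter_iff, Set.mem_ofPred_eq, mem_union, or_imp, forall_and]

theorem bipLaw_real_containsEdges {p : Fin n → ℝ} {s : Finset (Fin n × Fin m)}
    (hp : ∀ q ∈ s, p q.1 ∈ Set.Icc 0 1) :
    (bipLaw n m p).real (containsEdges s) = ∏ q ∈ s, p q.1 := by
  classical
  have hbox : containsEdges s = Set.univ.pi fun i => Set.univ.pi fun a =>
      if (i, a) ∈ s then {true} else Set.univ := by
    ext B
    simp only [containsEdges, Set.mem_ofPred_eq, Set.mem_pi, Set.mem_univ, true_implies]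
    refine ⟨fun h i a => ?_, fun h q hq => by simpa [hq] using h q.1 q.2⟩
    split_ifs with hq
    exacts [h _ hq, trivial]
  rw [measureReal_def, hbox, bipLaw, Measure.pi_pi]
  simp_rw [Measure.pi_pi, apply_ite (bern _), measure_univ]
  rw [← prod_product', univ_product_univ, prod_ite_mem, univ_inter, ENNReal.toReal_prod]
  refine prod_congr rfl fun q hq => ?_
  rw [bern_singleton_true (hp q hq).2, ENNReal.toReal_ofReal (hp q hq).1]

end BipartiteGraph

section Triangle

open Finset

variable {n m : ℕ} {p : Fin n → ℝ} {i j k : Fin n}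

def triangleAt (i j k : Fin n) (a : Fin m) : Set (Fin n → Fin m → Bool) :=
  containsEdges {(i, a), (j, a), (k, a)}

def wedgeAt (i j k : Fin n) (a b : Fin m) : Set (Fin n → Fin m → Bool) :=
  containsEdges {(i, a), (k, a), (j, b), (k, b)}

theorem triangleAt_subset (a : Fin m) :
    triangleAt i j k a ⊆ {B | Adj B i j ∧ Adj B i k ∧ Adj B j k} := by
  intro B hB
  simp only [triangleAt, containsEdges, mem_insert, mem_singleton, forall_eq_or_imp,
    forall_eq, Set.mem_ofPred_eq] at hB
  obtain ⟨hi, hj, hk⟩ := hB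
  exact ⟨⟨a, hi, hj⟩, ⟨a, hi, hk⟩, ⟨a, hj, hk⟩⟩

theorem subset_iUnion_triangleAt_union_iUnion_wedgeAt :
    {B : Fin n → Fin m → Bool | Adj B i k ∧ Adj B j k} ⊆
      (⋃ a, triangleAt i j k a) ∪ ⋃ q ∈ univ.offDiag, wedgeAt i j k q.1 q.2 := by
  rintro B ⟨⟨a, hia, hka⟩, ⟨b, hjb, hkb⟩⟩
  by_cases hab : a = b
  · subst hab
    left
    exact Set.mem_iUnion_of_mem a (by simp [triangleAt, containsEdges, *])
  · right
    exact Set.mem_biUnion (x := (a, b)) (by simp [hab])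
      (by simp [wedgeAt, containsEdges, *])

theorem measureReal_triangleAt (hij : i ≠ j) (hik : i ≠ k) (hjk : j ≠ k)
    (hpi : p i ∈ Set.Icc 0 1) (hpj : p j ∈ Set.Icc 0 1) (hpk : p k ∈ Set.Icc 0 1) (a : Fin m) :
    (bipLaw n m p).real (triangleAt i j k a) = p i * p j * p k := by
  rw [triangleAt, bipLaw_real_containsEdges (by simp [hpi, hpj, hpk, -Set.mem_Icc])]
  simp [hij, hik, hjk, mul_assoc]

theorem measureReal_triangleAt_inter (hij : i ≠ j) (hik : i ≠ k) (hjk : j ≠ k)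
    (hpi : p i ∈ Set.Icc 0 1) (hpj : p j ∈ Set.Icc 0 1) (hpk : p k ∈ Set.Icc 0 1)
    {a b : Fin m} (hab : a ≠ b) :
    (bipLaw n m p).real (triangleAt i j k a ∩ triangleAt i j k b) = (p i * p j * p k) ^ 2 := by
  rw [triangleAt, triangleAt, containsEdges_inter_containsEdges,
    bipLaw_real_containsEdges (by simp [hpi, hpj, hpk, -Set.mem_Icc])]
  rw [prod_union (by simp [Ne.symm hab])]
  simp only [mem_insert, Prod.mk.injEq, hij, and_true, mem_singleton, hik, or_self,
    not_false_eq_true, prod_insert, hjk, prod_singleton]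
  ring

theorem measureReal_wedgeAt (hij : i ≠ j) (hik : i ≠ k) (hjk : j ≠ k)
    (hpi : p i ∈ Set.Icc 0 1) (hpj : p j ∈ Set.Icc 0 1) (hpk : p k ∈ Set.Icc 0 1)
    {a b : Fin m} (hab : a ≠ b) :
    (bipLaw n m p).real (wedgeAt i j k a b) = p i * p j * p k * p k := by
  rw [wedgeAt, bipLaw_real_containsEdges (by simp [hpi, hpj, hpk, -Set.mem_Icc])]
  simp only [mem_insert, Prod.mk.injEq, hik, and_true, hij, hab, and_self, mem_singleton, or_self,
    not_false_eq_true, prod_insert, and_false, hjk, prod_singleton]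
  ring

theorem le_measureReal_triangle (hij : i ≠ j) (hik : i ≠ k) (hjk : j ≠ k)
    (hpi : p i ∈ Set.Icc 0 1) (hpj : p j ∈ Set.Icc 0 1) (hpk : p k ∈ Set.Icc 0 1) :
    m * (p i * p j * p k) - (m * (p i * p j * p k)) ^ 2 ≤
      (bipLaw n m p).real {B | Adj B i j ∧ Adj B i k ∧ Adj B j k} := by
  have hcard : (#(univ.offDiag : Finset (Fin m × Fin m)) : ℝ) ≤ m ^ 2 := by
    exact_mod_cast (card_offDiag_le_sq (univ : Finset (Fin m))).trans_eq (by simp)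
  calc m * (p i * p j * p k) - (m * (p i * p j * p k)) ^ 2
      ≤ ∑ a, (bipLaw n m p).real (triangleAt i j k a) - ∑ q ∈ univ.offDiag,
          (bipLaw n m p).real (triangleAt i j k q.1 ∩ triangleAt i j k q.2) := by
        rw [sum_congr rfl fun a _ => measureReal_triangleAt hij hik hjk hpi hpj hpk a,
          sum_congr rfl fun q hq =>
            measureReal_triangleAt_inter hij hik hjk hpi hpj hpk (mem_offDiag.1 hq).2.2]
        simp only [sum_const, card_univ, Fintype.card_fin, nsmul_eq_mul]
        nlinarith [sq_nonneg (p i * p j * p k)]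
    _ ≤ (bipLaw n m p).real (⋃ a, triangleAt i j k a) :=
        sum_measureReal_sub_le_measureReal_iUnion fun a => measurableSet_containsEdges _
    _ ≤ _ := measureReal_mono (Set.iUnion_subset triangleAt_subset)

theorem measureReal_cherry_le (hij : i ≠ j) (hik : i ≠ k) (hjk : j ≠ k)
    (hpi : p i ∈ Set.Icc 0 1) (hpj : p j ∈ Set.Icc 0 1) (hpk : p k ∈ Set.Icc 0 1) :
    (bipLaw n m p).real {B | Adj B i k ∧ Adj B j k} ≤
      m * (p i * p j * p k) + m * (p i * p j * p k) * (m * p k) := by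
  have hcard : (#(univ.offDiag : Finset (Fin m × Fin m)) : ℝ) ≤ m ^ 2 := by
    exact_mod_cast (card_offDiag_le_sq (univ : Finset (Fin m))).trans_eq (by simp)
  calc (bipLaw n m p).real {B | Adj B i k ∧ Adj B j k}
      ≤ (bipLaw n m p).real
          ((⋃ a, triangleAt i j k a) ∪ ⋃ q ∈ univ.offDiag, wedgeAt i j k q.1 q.2) :=
        measureReal_mono subset_iUnion_triangleAt_union_iUnion_wedgeAt
    _ ≤ ∑ a, (bipLaw n m p).real (triangleAt i j k a) +
          ∑ q ∈ univ.offDiag, (bipLaw n m p).real (wedgeAt i j k q.1 q.2) :=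
        (measureReal_union_le _ _).trans
          (add_le_add (measureReal_iUnion_fintype_le _) (measureReal_biUnion_finset_le _ _))
    _ ≤ _ := by
        rw [sum_congr rfl fun a _ => measureReal_triangleAt hij hik hjk hpi hpj hpk a,
          sum_congr rfl fun q hq =>
            measureReal_wedgeAt hij hik hjk hpi hpj hpk (mem_offDiag.1 hq).2.2]
        simp only [sum_const, card_univ, Fintype.card_fin, nsmul_eq_mul]
        have : 0 ≤ p i * p j * p k * p k :=
          mul_nonneg (mul_nonneg (mul_nonneg hpi.1 hpj.1) hpk.1) hpk.1
        nlinarith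

theorem abs_measureReal_triangle_div_cherry_sub_one_le (hij : i ≠ j) (hik : i ≠ k)
    (hjk : j ≠ k) (hpi : p i ∈ Set.Ioc 0 1) (hpj : p j ∈ Set.Ioc 0 1) (hpk : p k ∈ Set.Ioc 0 1)
    (hm : 0 < m) (hmpk : m * p k ≤ 1 / 2) :
    |(bipLaw n m p).real {B | Adj B i j ∧ Adj B i k ∧ Adj B j k} /
        (bipLaw n m p).real {B | Adj B i k ∧ Adj B j k} - 1| ≤ 4 * (m * p k) := by
  have hpi' := Set.Ioc_subset_Icc_self hpi
  have hpj' := Set.Ioc_subset_Icc_self hpj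
  have hpk' := Set.Ioc_subset_Icc_self hpk
  have hmt : (0 : ℝ) < m * (p i * p j * p k) :=
    mul_pos (Nat.cast_pos.2 hm) (mul_pos (mul_pos hpi.1 hpj.1) hpk.1)
  have hmt_le : (m : ℝ) * (p i * p j * p k) ≤ m * p k := by
    gcongr
    exact mul_le_of_le_one_left hpk.1.le (mul_le_one₀ hpi.2 hpj.1.le hpj.2)
  exact abs_div_sub_one_le_four_mul hmt hmt_le hmpk
    (le_measureReal_triangle hij hik hjk hpi' hpj' hpk')
    (measureReal_cherry_le hij hik hjk hpi' hpj' hpk') (measureReal_mono fun B hB => hB.2)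

end Triangle

theorem pw_mem_Ioc {γ α w : ℝ} {n : ℕ} (hγ : 0 < γ) (hn : 0 < n) (hw : 0 < w) :
    pw γ α n w ∈ Set.Ioc 0 1 :=
  ⟨lt_min (mul_pos (mul_pos hγ hw) (rpow_pos_of_pos (Nat.cast_pos.2 hn) _)) one_pos,
    min_le_right _ _⟩

theorem abs_clusterRatio_sub_one_le {α β γ : ℝ} {n : ℕ} {v : ℕ → ℝ} (hγ : 0 < γ) (hn : 3 ≤ n)
    (hm : 0 < numGroups β α n) (h0 : 0 < v 0) (h1 : 0 < v 1) (h2 : 0 < v 2)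
    (hmp : numGroups β α n * pw γ α n (v 2) ≤ 1 / 2) :
    |clusterRatio α β γ n v - 1| ≤ 4 * (numGroups β α n * pw γ α n (v 2)) := by
  rw [clusterRatio, dif_pos hn]
  exact abs_measureReal_triangle_div_cherry_sub_one_le (by simp [Fin.ext_iff])
    (by simp [Fin.ext_iff]) (by simp [Fin.ext_iff]) (pw_mem_Ioc hγ (by omega) h0)
    (pw_mem_Ioc hγ (by omega) h1) (pw_mem_Ioc hγ (by omega) h2) hm hmp

theorem numGroups_mul_pw_mul_rpow_le {α β γ w : ℝ} {n : ℕ} (hn : 0 < n) (hβ : 0 ≤ β)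
    (hγ : 0 ≤ γ) (hw : 0 ≤ w) :
    numGroups β α n * pw γ α n w * (n : ℝ) ^ ((1 - α) / 2) ≤ β * γ * w := by
  have hX : (0 : ℝ) < n := Nat.cast_pos.2 hn
  calc numGroups β α n * pw γ α n w * (n : ℝ) ^ ((1 - α) / 2)
      ≤ β * (n : ℝ) ^ α * (γ * w * (n : ℝ) ^ (-(1 + α) / 2)) * (n : ℝ) ^ ((1 - α) / 2) := by
        have : 0 ≤ pw γ α n w := le_min (by positivity) zero_le_one
        gcongr
        exacts [Nat.floor_le (by positivity), min_le_left _ _]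
    _ = β * γ * w * (n : ℝ) ^ (α + -(1 + α) / 2 + (1 - α) / 2) := by
        rw [rpow_add hX, rpow_add hX]; ring
    _ = β * γ * w := by ring_nf; rw [rpow_zero, mul_one]

theorem eventually_pos_numGroups {α β : ℝ} (hα : 0 < α) (hβ : 0 < β) :
    ∀ᶠ n in atTop, 0 < numGroups β α n :=
  (((tendsto_rpow_atTop hα).comp tendsto_natCast_atTop_atTop).const_mul_atTop hβ
    |>.eventually_ge_atTop 1).mono fun _ hn => Nat.floor_pos.2 hn

theorem tendsto_measure_setOf_le_of_tendsto_atTop {Ω ι : Type*} [MeasurableSpace Ω]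
    {P : Measure Ω} [IsFiniteMeasure P] {Y : Ω → ℝ} (hY : Measurable Y) {l : Filter ι}
    {r : ι → ℝ} (hr : Tendsto r l atTop) :
    Tendsto (fun x => P {ω | r x ≤ Y ω}) l (nhds 0) := by
  have h := tendsto_measure_iInter_atTop (μ := P) (s := fun t : ℝ => {ω | t ≤ Y ω})
    (fun _ => (measurableSet_le measurable_const hY).nullMeasurableSet)
    (fun _ _ hst _ hω => hst.trans hω) ⟨0, measure_ne_top _ _⟩
  have hempty : ⋂ t : ℝ, {ω | t ≤ Y ω} = ∅ := Set.eq_empty_of_forall_notMem fun ω hω =>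
    (lt_add_one (Y ω)).not_ge (Set.mem_iInter.1 hω (Y ω + 1))
  rw [hempty, measure_empty] at h
  exact h.comp hr

theorem ae_pos_of_map_eq {Ω : Type*} [MeasurableSpace Ω] {P : Measure Ω} {X : Ω → ℝ}
    {F : Measure ℝ} (hX : Measurable X) (hmap : P.map X = F) (hF : F (Set.Iic 0) = 0) :
    ∀ᵐ ω ∂P, 0 < X ω := by
  have hpos : ∀ᵐ x ∂F, 0 < x :=
    ae_iff.2 (measure_mono_null (fun _ hx => not_lt.1 hx) hF)
  exact ae_of_ae_map hX.aemeasurable (hmap ▸ hpos)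

theorem clustering_alpha_lt_one_general {Ω : Type*} [MeasurableSpace Ω]
    (P : Measure Ω) [IsProbabilityMeasure P]
    (α β γ : ℝ) (hα : 0 < α) (hα1 : α < 1) (hβ : 0 < β) (hγ : 0 < γ)
    (F : Measure ℝ)
    (hFpos : F (Set.Iic 0) = 0)
    (W : ℕ → Ω → ℝ) (hWmeas : ∀ i, Measurable (W i))
    (hWdist : ∀ i, Measure.map (W i) P = F) :
    ∀ ε : ℝ, 0 < ε →
      Tendsto (fun n => P {ω | ε ≤ |clusterRatio α β γ n (fun l => W l ω) - 1|})
        atTop (nhds 0) := by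
  intro ε hε
  set δ := min (1 / 2) (ε / 4)
  have hW (l : ℕ) : ∀ᵐ ω ∂P, 0 < W l ω := ae_pos_of_map_eq (hWmeas l) (hWdist l) hFpos
  have hr : Tendsto (fun n : ℕ => δ * (n : ℝ) ^ ((1 - α) / 2)) atTop atTop :=
    ((tendsto_rpow_atTop (by linarith)).comp tendsto_natCast_atTop_atTop).const_mul_atTop
      (by positivity)
  refine tendsto_of_tendsto_of_tendsto_of_le_of_le' tendsto_const_nhds
    (tendsto_measure_setOf_le_of_tendsto_atTop (P := P) ((hWmeas 2).const_mul (β * γ)) hr)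
    (.of_forall fun _ => zero_le) ?_
  filter_upwards [eventually_ge_atTop 3, eventually_pos_numGroups hα hβ] with n hn hm
  refine measure_mono_ae ?_
  filter_upwards [hW 0, hW 1, hW 2] with ω h0 h1 h2 hbad
  by_contra hsmall
  have hmp : numGroups β α n * pw γ α n (W 2 ω) < δ :=
    lt_of_mul_lt_mul_right ((numGroups_mul_pw_mul_rpow_le (by omega) hβ.le hγ.le h2.le).trans_lt
      (not_le.1 hsmall)) (by positivity)
  have hclose := abs_clusterRatio_sub_one_le (v := fun l => W l ω) hγ hn hm h0 h1 h2
    (hmp.le.trans (min_le_left _ _))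
  exact hbad.not_gt (hclose.trans_lt (by linarith [min_le_right (1 / 2 : ℝ) (ε / 4)]))

/-- Theorem 2(a): in the random intersection graph `G(n,m,F)` with `m = ⌊β n^α⌋` and
`p_i = min(γ W_i n^{-(1+α)/2}, 1)`, if `F` has finite mean and `α < 1`, then the
conditional clustering coefficient `c̄_{i,j,k}^{(n)}` converges to `1` in probability
as `n → ∞`. -/
theorem clustering_alpha_lt_one {Ω : Type*} [MeasurableSpace Ω]
    (P : Measure Ω) [IsProbabilityMeasure P]
    (α β γ : ℝ) (hα : 0 < α) (hα1 : α < 1) (hβ : 0 < β) (hγ : 0 < γ)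
    (F : Measure ℝ) [IsProbabilityMeasure F]
    (hFpos : F (Set.Iic 0) = 0)
    (hFint : Integrable (fun x => x) F) (hFmean : ∫ x, x ∂F = 1)
    (W : ℕ → Ω → ℝ) (hWmeas : ∀ i, Measurable (W i))
    (hWdist : ∀ i, Measure.map (W i) P = F)
    (hWindep : iIndepFun W P) :
    ∀ ε : ℝ, 0 < ε →
      Tendsto (fun n => P {ω | ε ≤ |clusterRatio α β γ n (fun l => W l ω) - 1|})
        atTop (nhds 0) :=
  clustering_alpha_lt_one_general P α β γ hα hα1 hβ hγ F hFpos W hWmeas hWdist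
end
end

section
/- In the random intersection graph G(n,m,F) with m = ⌊βn^α⌋ and p_i = min(γ W_i n^{-(1+α)/2}, 1), if F has finite mean and α = 1, then for any three distinct vertices i, j, k the conditional clustering coefficient c̄_{i,j,k}^{(n)} = P̄_n(E_{ij} | E_{ik}, E_{jk}) converges to (1 + βγW_k)^{-1} in probability as n → ∞. -/
open MeasureTheory ProbabilityTheory Filter Real

noncomputable section

open Topology

/-!
Conditionally on the weights the `m` groups are independent, and a group contains a given set of
vertices with probability the product of their membership probabilities `p_l`. Inclusion–exclusion
over the events "no group contains both ends of an edge" therefore expresses the probabilities of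
the wedge `E_ik ∩ E_jk` and of the triangle as explicit polynomials of degree `m` in the `p_l`.
With `p_l = γ W_l / n` and `m ~ β n` both are of order `n⁻²`: a triangle essentially needs one
group containing `i, j, k` (probability `~ β γ³ W_i W_j W_k / n²`), whereas a wedge also arises from
two different groups through `k`, which costs an extra factor `β γ W_k`. So the ratio converges
for every positive weight sequence, hence almost surely, hence in probability.
-/

lemma MeasureTheory.Measure.pi_setOf_forall_mem {ι : Type*} [Fintype ι] {α : ι → Type*}
    [∀ i, MeasurableSpace (α i)] (μ : ∀ i, Measure (α i)) [∀ i, IsProbabilityMeasure (μ i)]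
    (s : Finset ι) (t : ∀ i, Set (α i)) :
    Measure.pi μ {x | ∀ i ∈ s, x i ∈ t i} = ∏ i ∈ s, μ i (t i) := by
  classical
  have : {x | ∀ i ∈ s, x i ∈ t i} = Set.univ.pi fun i => if i ∈ s then t i else Set.univ := by
    ext x; simp only [Set.mem_ofPred_eq, Set.mem_univ_pi]
    refine forall_congr' fun i => ?_
    split_ifs with h <;> simp [h]
  rw [this, Measure.pi_pi, ← Finset.prod_subset (Finset.subset_univ s)]
  · exact Finset.prod_congr rfl fun i hi => by simp [hi]
  · intro i _ hi; simp [hi]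

lemma MeasureTheory.Measure.map_pi_pi_swap {ι κ α : Type*} [Fintype ι] [Fintype κ] [Countable α]
    [MeasurableSpace α] [MeasurableSingletonClass α] (μ : ι → Measure α)
    [∀ i, SigmaFinite (μ i)] :
    (Measure.pi fun i => Measure.pi fun _ : κ => μ i).map (fun x k i => x i k) =
      Measure.pi fun _ : κ => Measure.pi μ := by
  refine Measure.ext_of_singleton fun y => ?_
  have : (fun x : ι → κ → α => fun k i => x i k) ⁻¹' {y} = {fun i k => y k i} := by
    ext x
    simp only [Set.mem_preimage, Set.mem_singleton_iff, funext_iff]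
    exact forall_comm
  rw [Measure.map_apply .of_discrete (.singleton y), this]
  simp only [Measure.pi_singleton]
  exact Finset.prod_comm

section InclusionExclusion

variable {Ω : Type*} [MeasurableSpace Ω] (μ : Measure Ω) [IsProbabilityMeasure μ]
  {X Y Z : Set Ω}

lemma probReal_compl_inter_compl (hX : MeasurableSet X) (hY : MeasurableSet Y) :
    μ.real (Xᶜ ∩ Yᶜ) = 1 - μ.real X - μ.real Y + μ.real (X ∩ Y) := by
  rw [← Set.compl_union, probReal_compl_eq_one_sub (hX.union hY)]
  linarith [measureReal_union_add_inter (μ := μ) (s := X) hY]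

lemma probReal_compl_inter_compl_inter_compl (hX : MeasurableSet X) (hY : MeasurableSet Y)
    (hZ : MeasurableSet Z) :
    μ.real (Xᶜ ∩ Yᶜ ∩ Zᶜ) = 1 - μ.real X - μ.real Y - μ.real Z + μ.real (X ∩ Y)
      + μ.real (X ∩ Z) + μ.real (Y ∩ Z) - μ.real (X ∩ Y ∩ Z) := by
  rw [← Set.compl_union, ← Set.compl_union, probReal_compl_eq_one_sub ((hX.union hY).union hZ)]
  have hXY := measureReal_union_add_inter (μ := μ) (s := X) hY
  have hXYZ := measureReal_union_add_inter (μ := μ) (s := X ∪ Y) hZ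
  have hXZYZ := measureReal_union_add_inter (μ := μ) (s := X ∩ Z) (hY.inter hZ)
  rw [Set.union_inter_distrib_right] at hXYZ
  rw [show X ∩ Z ∩ (Y ∩ Z) = X ∩ Y ∩ Z by grind] at hXZYZ
  linarith

end InclusionExclusion

lemma bern_real_true (p : ℝ) : (bern p).real {true} = max (min p 1) 0 := by
  rw [measureReal_def, bern, PMF.toMeasure_apply_singleton _ _ (measurableSet_singleton _)]
  change ((Real.toNNReal (min p 1) : ENNReal)).toReal = _
  simp [Real.coe_toNNReal']

def column {n m : ℕ} (B : Fin n → Fin m → Bool) (a : Fin m) : Fin n → Bool := fun l => B l a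

abbrev columnLaw {n : ℕ} (p : Fin n → ℝ) : Measure (Fin n → Bool) := Measure.pi fun l => bern (p l)

def containsAll {n : ℕ} (s : Finset (Fin n)) : Set (Fin n → Bool) := {c | ∀ l ∈ s, c l = true}

def wedgePoly (m : ℕ) (x y z : ℝ) : ℝ :=
  1 - (1 - x * z) ^ m - (1 - y * z) ^ m + (1 - x * z - y * z + x * y * z) ^ m

def trianglePoly (m : ℕ) (x y z : ℝ) : ℝ :=
  1 - (1 - x * y) ^ m - (1 - x * z) ^ m - (1 - y * z) ^ m
    + (1 - x * y - x * z + x * y * z) ^ m + (1 - x * y - y * z + x * y * z) ^ m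
    + (1 - x * z - y * z + x * y * z) ^ m - (1 - x * y - x * z - y * z + 2 * (x * y * z)) ^ m

section ExactFormula

variable {n m : ℕ} (p : Fin n → ℝ)

lemma bipLaw_real_setOf_forall_column_mem (S : Set (Fin n → Bool)) :
    (bipLaw n m p).real {B | ∀ a, column B a ∈ S} = (columnLaw p).real S ^ m := by
  have : {B | ∀ a, column B a ∈ S} =
      (fun (B : Fin n → Fin m → Bool) a l => B l a) ⁻¹' Set.univ.pi fun _ => S := by
    ext B; simp only [Set.mem_ofPred_eq, Set.mem_preimage, Set.mem_univ_pi]; rfl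
  rw [measureReal_def, this, ← Measure.map_apply .of_discrete .of_discrete, bipLaw,
    Measure.map_pi_pi_swap, Measure.pi_pi, Finset.prod_const, Finset.card_univ, Fintype.card_fin,
    ENNReal.toReal_pow, columnLaw, measureReal_def]

lemma measureReal_containsAll (s : Finset (Fin n)) :
    (columnLaw p).real (containsAll s) = ∏ l ∈ s, (bern (p l)).real {true} := by
  have := Measure.pi_setOf_forall_mem (fun l => bern (p l)) s fun _ => {true}
  simp only [Set.mem_singleton_iff] at this
  rw [measureReal_def, columnLaw, containsAll, this, ENNReal.toReal_prod]
  rfl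

lemma containsAll_inter (s t : Finset (Fin n)) :
    containsAll s ∩ containsAll t = containsAll (s ∪ t) := by
  ext c; simp [containsAll, or_imp, forall_and]

lemma setOf_adj (i j : Fin n) :
    {B : Fin n → Fin m → Bool | Adj B i j} = {B | ∀ a, column B a ∈ (containsAll {i, j})ᶜ}ᶜ := by
  ext B; simp [Adj, column, containsAll]

lemma setOf_forall_column_mem_inter (S T : Set (Fin n → Bool)) :
    {B : Fin n → Fin m → Bool | ∀ a, column B a ∈ S} ∩ {B | ∀ a, column B a ∈ T} =
      {B | ∀ a, column B a ∈ S ∩ T} := by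
  ext B; simp [forall_and]

variable {i j k : Fin n} (hij : i ≠ j) (hik : i ≠ k) (hjk : j ≠ k)
include hij hik hjk

lemma bipLaw_real_wedge :
    (bipLaw n m p).real {B | Adj B i k ∧ Adj B j k} =
      wedgePoly m ((bern (p i)).real {true}) ((bern (p j)).real {true})
        ((bern (p k)).real {true}) := by
  rw [Set.ofPred_and, setOf_adj, setOf_adj, probReal_compl_inter_compl _ .of_discrete .of_discrete,
    setOf_forall_column_mem_inter]
  simp only [bipLaw_real_setOf_forall_column_mem]
  rw [probReal_compl_inter_compl _ .of_discrete .of_discrete, containsAll_inter,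
    probReal_compl_eq_one_sub .of_discrete, probReal_compl_eq_one_sub .of_discrete]
  simp only [measureReal_containsAll]
  rw [show ({i, k} ∪ {j, k} : Finset (Fin n)) = {i, j, k} by grind]
  simp only [Finset.prod_insert, Finset.prod_singleton, Finset.mem_insert, Finset.mem_singleton,
    hij, hik, hjk, or_self, not_false_eq_true, wedgePoly]
  ring

lemma bipLaw_real_triangle :
    (bipLaw n m p).real {B | Adj B i j ∧ Adj B i k ∧ Adj B j k} =
      trianglePoly m ((bern (p i)).real {true}) ((bern (p j)).real {true})
        ((bern (p k)).real {true}) := by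
  simp only [← and_assoc]
  rw [Set.ofPred_and, Set.ofPred_and, setOf_adj, setOf_adj, setOf_adj,
    probReal_compl_inter_compl_inter_compl _ .of_discrete .of_discrete .of_discrete]
  simp only [setOf_forall_column_mem_inter, bipLaw_real_setOf_forall_column_mem]
  rw [probReal_compl_inter_compl_inter_compl _ .of_discrete .of_discrete .of_discrete]
  simp only [probReal_compl_inter_compl _ MeasurableSet.of_discrete MeasurableSet.of_discrete,
    probReal_compl_eq_one_sub MeasurableSet.of_discrete, containsAll_inter, measureReal_containsAll]
  rw [show ({i, j} ∪ {i, k} : Finset (Fin n)) = {i, j, k} by grind,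
    show ({i, j} ∪ {j, k} : Finset (Fin n)) = {i, j, k} by grind,
    show ({i, k} ∪ {j, k} : Finset (Fin n)) = {i, j, k} by grind,
    show ({i, j, k} ∪ {j, k} : Finset (Fin n)) = {i, j, k} by grind]
  simp only [Finset.prod_insert, Finset.prod_singleton, Finset.mem_insert, Finset.mem_singleton,
    hij, hik, hjk, or_self, not_false_eq_true, trianglePoly]
  ring

end ExactFormula

lemma mul_pow_sub_one_mul_sub_le_pow_sub_pow {a b : ℝ} (hb : 0 ≤ b) (hba : b ≤ a) (m : ℕ) :
    m * b ^ (m - 1) * (a - b) ≤ a ^ m - b ^ m := by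
  induction m with
  | zero => simp
  | succ m ih =>
    rcases m with _ | m
    · simp
    have hbm : b * b ^ m ≤ a * b ^ m := mul_le_mul_of_nonneg_right hba (pow_nonneg hb m)
    simp only [Nat.add_sub_cancel, pow_succ] at ih ⊢
    push_cast at ih ⊢
    nlinarith [mul_le_mul_of_nonneg_left ih (hb.trans hba), pow_nonneg hb m, sub_nonneg.2 hba,
      mul_nonneg (mul_nonneg (pow_nonneg hb m) (sub_nonneg.2 hba)) (sub_nonneg.2 hba)]

lemma pow_sub_pow_le_mul_sub {a b : ℝ} (hb : 0 ≤ b) (hba : b ≤ a) (ha : a ≤ 1) (m : ℕ) :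
    a ^ m - b ^ m ≤ m * (a - b) := by
  have h := abs_pow_sub_pow_le a b m
  rw [abs_of_nonneg (sub_nonneg.2 (pow_le_pow_left₀ hb hba m)), abs_of_nonneg (sub_nonneg.2 hba),
    max_eq_left (by rw [abs_of_nonneg hb, abs_of_nonneg (hb.trans hba)]; exact hba),
    abs_of_nonneg (hb.trans hba)] at h
  calc a ^ m - b ^ m ≤ (a - b) * m * a ^ (m - 1) := h
    _ ≤ (a - b) * m * 1 := by gcongr; exact pow_le_one₀ (hb.trans hba) ha
    _ = m * (a - b) := by ring

section Asymptotics

variable {m : ℕ → ℕ} {β : ℝ}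

lemma tendsto_pow_of_tendsto_mul_one_sub {b : ℕ → ℝ} (hb0 : ∀ n, 0 ≤ b n) (hb1 : ∀ n, b n ≤ 1)
    (h : Tendsto (fun n => (m n : ℝ) * (1 - b n)) atTop (𝓝 0)) :
    Tendsto (fun n => b n ^ m n) atTop (𝓝 1) := by
  refine tendsto_of_tendsto_of_tendsto_of_le_of_le (g := fun n => 1 - m n * (1 - b n))
    (by simpa using tendsto_const_nhds.sub h) tendsto_const_nhds (fun n => ?_)
    fun n => pow_le_one₀ (hb0 n) (hb1 n)
  have := one_add_mul_sub_le_pow (by linarith [hb0 n] : (-1 : ℝ) ≤ b n) (m n)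
  linarith

lemma tendsto_zero_of_tendsto_natCast_mul {x : ℕ → ℝ} {c : ℝ}
    (h : Tendsto (fun n : ℕ => (n : ℝ) * x n) atTop (𝓝 c)) : Tendsto x atTop (𝓝 0) := by
  refine (h.div_atTop tendsto_natCast_atTop_atTop).congr' ?_
  filter_upwards [eventually_ne_atTop (0 : ℕ)] with n hn
  field_simp

variable (hm : Tendsto (fun n => (m n : ℝ) / n) atTop (𝓝 β))
include hm

lemma tendsto_npow_mul_pow_sub_pow (k : ℕ) {a b : ℕ → ℝ} {c : ℝ} (hb0 : ∀ n, 0 ≤ b n)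
    (hba : ∀ n, b n ≤ a n) (ha1 : ∀ n, a n ≤ 1)
    (hdiff : Tendsto (fun n : ℕ => (n : ℝ) ^ (k + 1) * (a n - b n)) atTop (𝓝 c))
    (hb : Tendsto (fun n : ℕ => (n : ℝ) * (1 - b n)) atTop (𝓝 0)) :
    Tendsto (fun n : ℕ => (n : ℝ) ^ k * (a n ^ m n - b n ^ m n)) atTop (𝓝 (c * β)) := by
  have hmb : Tendsto (fun n => (m n : ℝ) * (1 - b n)) atTop (𝓝 0) := by
    refine (mul_zero β ▸ hm.mul hb).congr' ?_
    filter_upwards [eventually_ne_atTop (0 : ℕ)] with n hn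
    field_simp
  have hpow := tendsto_pow_of_tendsto_mul_one_sub hb0 (fun n => (hba n).trans (ha1 n)) hmb
  -- `a^m - b^m` lies between `m b^(m-1) (a - b)` and `m (a - b)`, and `b^(m-1) ≥ b^m → 1`.
  have hlower := (hdiff.mul hm).mul hpow
  rw [mul_one] at hlower
  refine tendsto_of_tendsto_of_tendsto_of_le_of_le' hlower (hdiff.mul hm) ?_ ?_
  all_goals filter_upwards [eventually_ne_atTop (0 : ℕ)] with n hn
  all_goals have hn' : (0 : ℝ) < n := by positivity
  all_goals have hscale : (n : ℝ) ^ (k + 1) * (a n - b n) * (m n / n) =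
      (n : ℝ) ^ k * (m n * (a n - b n)) := by field_simp; ring
  · have hbm : b n ^ m n ≤ b n ^ (m n - 1) :=
      pow_le_pow_of_le_one (hb0 n) ((hba n).trans (ha1 n)) (Nat.sub_le _ _)
    have hab := mul_pow_sub_one_mul_sub_le_pow_sub_pow (hb0 n) (hba n) (m n)
    rw [hscale]
    calc (n : ℝ) ^ k * (m n * (a n - b n)) * b n ^ m n
        ≤ (n : ℝ) ^ k * (m n * b n ^ (m n - 1) * (a n - b n)) := by
          have := mul_le_mul_of_nonneg_left hbm
            (mul_nonneg (m n).cast_nonneg (sub_nonneg.2 (hba n)))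
          rw [mul_assoc]
          exact mul_le_mul_of_nonneg_left (by linarith) (by positivity)
      _ ≤ _ := by gcongr
  · rw [hscale]
    gcongr
    exact pow_sub_pow_le_mul_sub (hb0 n) (hba n) (ha1 n) (m n)

lemma tendsto_mul_one_sub_one_sub_pow {s : ℕ → ℝ} {σ : ℝ} (hs : ∀ n, s n ∈ Set.Icc (0 : ℝ) 1)
    (hσ : Tendsto (fun n : ℕ => (n : ℝ) ^ 2 * s n) atTop (𝓝 σ)) :
    Tendsto (fun n : ℕ => (n : ℝ) * (1 - (1 - s n) ^ m n)) atTop (𝓝 (σ * β)) := by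
  have hs0 : Tendsto (fun n : ℕ => (n : ℝ) * s n) atTop (𝓝 0) :=
    tendsto_zero_of_tendsto_natCast_mul (by simpa only [sq, mul_assoc] using hσ)
  simpa using tendsto_npow_mul_pow_sub_pow hm 1 (a := fun _ => 1) (b := fun n => 1 - s n)
    (fun n => by linarith [(hs n).2]) (fun n => by linarith [(hs n).1]) (fun _ => le_rfl)
    (by simpa using hσ) (by simpa using hs0)

variable {x y z : ℕ → ℝ} {cx cy cz : ℝ}
  (hx : ∀ n, x n ∈ Set.Icc (0 : ℝ) 1) (hy : ∀ n, y n ∈ Set.Icc (0 : ℝ) 1)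
  (hz : ∀ n, z n ∈ Set.Icc (0 : ℝ) 1)
  (hcx : Tendsto (fun n : ℕ => (n : ℝ) * x n) atTop (𝓝 cx))
  (hcy : Tendsto (fun n : ℕ => (n : ℝ) * y n) atTop (𝓝 cy))
  (hcz : Tendsto (fun n : ℕ => (n : ℝ) * z n) atTop (𝓝 cz))
include hx hy hz hcx hcy hcz

lemma tendsto_sq_mul_pow_sub_pow_wedge :
    Tendsto (fun n : ℕ => (n : ℝ) ^ 2 * ((1 - x n * z n - y n * z n + x n * y n * z n) ^ m n
      - ((1 - x n * z n) * (1 - y n * z n)) ^ m n)) atTop (𝓝 (cx * cy * cz * β)) := by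
  have hy' := tendsto_zero_of_tendsto_natCast_mul hcy
  have hz' := tendsto_zero_of_tendsto_natCast_mul hcz
  refine tendsto_npow_mul_pow_sub_pow hm 2 (fun n => ?_) (fun n => ?_) (fun n => ?_) ?_ ?_
  · obtain ⟨⟨hx0, hx1⟩, ⟨hy0, hy1⟩, ⟨hz0, hz1⟩⟩ := (⟨hx n, hy n, hz n⟩ : _ ∧ _ ∧ _)
    exact mul_nonneg (by nlinarith) (by nlinarith)
  · obtain ⟨⟨hx0, hx1⟩, ⟨hy0, hy1⟩, ⟨hz0, hz1⟩⟩ := (⟨hx n, hy n, hz n⟩ : _ ∧ _ ∧ _)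
    nlinarith [mul_nonneg (mul_nonneg (mul_nonneg hx0 hy0) hz0) (sub_nonneg.2 hz1)]
  · obtain ⟨⟨hx0, hx1⟩, ⟨hy0, hy1⟩, ⟨hz0, hz1⟩⟩ := (⟨hx n, hy n, hz n⟩ : _ ∧ _ ∧ _)
    nlinarith [mul_nonneg (mul_nonneg hx0 hz0) (sub_nonneg.2 hy1), mul_nonneg hy0 hz0]
  · have := ((hcx.mul hcy).mul hcz).mul ((tendsto_const_nhds (x := (1 : ℝ))).sub hz')
    rw [sub_zero, mul_one] at this
    exact this.congr fun n => by ring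
  · have := ((hcx.mul hz').add (hcy.mul hz')).sub ((hcx.mul hz').mul (hy'.mul hz'))
    simp only [mul_zero, add_zero, sub_zero] at this
    exact this.congr fun n => by ring

lemma tendsto_sq_mul_pow_sub_pow_triangle :
    Tendsto (fun n : ℕ => (n : ℝ) ^ 2 *
      ((1 - x n * y n - x n * z n - y n * z n + 2 * (x n * y n * z n)) ^ m n
        - ((1 - x n * y n) * (1 - x n * z n) * (1 - y n * z n)) ^ m n)) atTop
      (𝓝 (cx * cy * cz * 2 * β)) := by
  have hx' := tendsto_zero_of_tendsto_natCast_mul hcx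
  have hy' := tendsto_zero_of_tendsto_natCast_mul hcy
  have hz' := tendsto_zero_of_tendsto_natCast_mul hcz
  refine tendsto_npow_mul_pow_sub_pow hm 2 (fun n => ?_) (fun n => ?_) (fun n => ?_) ?_ ?_
  · obtain ⟨⟨hx0, hx1⟩, ⟨hy0, hy1⟩, ⟨hz0, hz1⟩⟩ := (⟨hx n, hy n, hz n⟩ : _ ∧ _ ∧ _)
    exact mul_nonneg (mul_nonneg (by nlinarith) (by nlinarith)) (by nlinarith)
  · obtain ⟨⟨hx0, hx1⟩, ⟨hy0, hy1⟩, ⟨hz0, hz1⟩⟩ := (⟨hx n, hy n, hz n⟩ : _ ∧ _ ∧ _)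
    have : 0 ≤ x n * y n * z n * ((1 - x n) * (1 - y n) + (1 - z n) * (1 - x n * y n)) := by
      have : x n * y n ≤ 1 := by nlinarith
      have := sub_nonneg.2 hx1; have := sub_nonneg.2 hy1; have := sub_nonneg.2 hz1
      positivity
    linarith
  · obtain ⟨⟨hx0, hx1⟩, ⟨hy0, hy1⟩, ⟨hz0, hz1⟩⟩ := (⟨hx n, hy n, hz n⟩ : _ ∧ _ ∧ _)
    nlinarith [mul_nonneg (mul_nonneg hx0 hy0) (sub_nonneg.2 hz1),
      mul_nonneg (mul_nonneg hx0 hz0) (sub_nonneg.2 hy1), mul_nonneg hy0 hz0]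
  · have := ((hcx.mul hcy).mul hcz).mul ((((tendsto_const_nhds (x := (2 : ℝ))).sub hx').sub
      hy').sub hz' |>.add ((hx'.mul hy').mul hz'))
    simp only [mul_zero, add_zero, sub_zero] at this
    exact this.congr fun n => by ring
  · have hupper := ((hcx.mul hy').add (hcx.mul hz')).add (hcy.mul hz')
    simp only [mul_zero, add_zero] at hupper
    refine tendsto_of_tendsto_of_tendsto_of_le_of_le tendsto_const_nhds hupper (fun n => ?_)
      fun n => ?_
    all_goals
      obtain ⟨⟨hx0, hx1⟩, ⟨hy0, hy1⟩, ⟨hz0, hz1⟩⟩ := (⟨hx n, hy n, hz n⟩ : _ ∧ _ ∧ _)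
      have hu : 0 ≤ 1 - x n * y n := by nlinarith
      have hv : 0 ≤ 1 - x n * z n := by nlinarith
      have hw : 0 ≤ 1 - y n * z n := by nlinarith
    · have : (1 - x n * y n) * (1 - x n * z n) * (1 - y n * z n) ≤ 1 :=
        mul_le_one₀ (mul_le_one₀ (by nlinarith) hv (by nlinarith)) hw (by nlinarith)
      exact mul_nonneg n.cast_nonneg (by linarith)
    · have : 1 - x n * y n - x n * z n - y n * z n ≤
          (1 - x n * y n) * (1 - x n * z n) * (1 - y n * z n) := by
        nlinarith [mul_nonneg (mul_nonneg (mul_nonneg hx0 hy0) (mul_nonneg hx0 hz0)) hw,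
          mul_nonneg (add_nonneg (mul_nonneg hx0 hy0) (mul_nonneg hx0 hz0)) (mul_nonneg hy0 hz0)]
      nlinarith [n.cast_nonneg (α := ℝ)]

lemma tendsto_sq_mul_wedgePoly :
    Tendsto (fun n : ℕ => (n : ℝ) ^ 2 * wedgePoly (m n) (x n) (y n) (z n)) atTop
      (𝓝 (cx * cy * cz * β * (1 + cz * β))) := by
  have hxz := tendsto_mul_one_sub_one_sub_pow hm (s := fun n => x n * z n)
    (fun n => unitInterval.mul_mem (hx n) (hz n)) ((hcx.mul hcz).congr fun n => by ring)
  have hyz := tendsto_mul_one_sub_one_sub_pow hm (s := fun n => y n * z n)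
    (fun n => unitInterval.mul_mem (hy n) (hz n)) ((hcy.mul hcz).congr fun n => by ring)
  -- With `A = (1 - xz)^m` and `B = (1 - yz)^m`,
  -- `wedgePoly = (1 - A) (1 - B) + ((1 - xz - yz + xyz)^m - A B)`.
  convert (hxz.mul hyz).add (tendsto_sq_mul_pow_sub_pow_wedge hm hx hy hz hcx hcy hcz)
    using 2
  · simp only [wedgePoly, mul_pow]; ring
  · ring

lemma tendsto_sq_mul_trianglePoly :
    Tendsto (fun n : ℕ => (n : ℝ) ^ 2 * trianglePoly (m n) (x n) (y n) (z n)) atTop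
      (𝓝 (cx * cy * cz * β)) := by
  have hxy := tendsto_mul_one_sub_one_sub_pow hm (s := fun n => x n * y n)
    (fun n => unitInterval.mul_mem (hx n) (hy n)) ((hcx.mul hcy).congr fun n => by ring)
  have hxz := tendsto_mul_one_sub_one_sub_pow hm (s := fun n => x n * z n)
    (fun n => unitInterval.mul_mem (hx n) (hz n)) ((hcx.mul hcz).congr fun n => by ring)
  have hyz := tendsto_mul_one_sub_one_sub_pow hm (s := fun n => y n * z n)
    (fun n => unitInterval.mul_mem (hy n) (hz n)) ((hcy.mul hcz).congr fun n => by ring)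
  -- `trianglePoly` is `(1 - A) (1 - B) (1 - C)`, of order `n⁻³`, plus the three wedge corrections
  -- minus the triangle correction.
  have hsingles := ((hxy.mul hxz).mul hyz).mul (tendsto_inv_atTop_nhds_zero_nat (𝕜 := ℝ))
  have hx_shared := tendsto_sq_mul_pow_sub_pow_wedge hm hy hz hx hcy hcz hcx
  have hy_shared := tendsto_sq_mul_pow_sub_pow_wedge hm hx hz hy hcx hcz hcy
  have hz_shared := tendsto_sq_mul_pow_sub_pow_wedge hm hx hy hz hcx hcy hcz
  have htriangle := tendsto_sq_mul_pow_sub_pow_triangle hm hx hy hz hcx hcy hcz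
  convert (((hsingles.add hx_shared).add hy_shared).add hz_shared).sub htriangle using 2
  · rename_i n
    rcases eq_or_ne (n : ℝ) 0 with hn | hn
    · simp [hn]
    · simp only [trianglePoly, mul_pow]
      field_simp
      ring
  · ring

lemma tendsto_trianglePoly_div_wedgePoly (hβ : 0 < β) (hcx_pos : 0 < cx) (hcy_pos : 0 < cy)
    (hcz_pos : 0 < cz) :
    Tendsto (fun n => trianglePoly (m n) (x n) (y n) (z n) / wedgePoly (m n) (x n) (y n) (z n))
      atTop (𝓝 (1 + cz * β)⁻¹) := by
  have hc : cx * cy * cz * β ≠ 0 := by positivity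
  have := (tendsto_sq_mul_trianglePoly hm hx hy hz hcx hcy hcz).div
    (tendsto_sq_mul_wedgePoly hm hx hy hz hcx hcy hcz) (by positivity)
  rw [div_mul_cancel_left₀ hc] at this
  refine this.congr' ?_
  filter_upwards [eventually_ne_atTop (0 : ℕ)] with n hn
  exact mul_div_mul_left _ _ (by positivity)

end Asymptotics

lemma clusterRatio_eq (α β γ : ℝ) {n : ℕ} (hn : 3 ≤ n) (v : ℕ → ℝ) :
    clusterRatio α β γ n v =
      trianglePoly (numGroups β α n) (max (pw γ α n (v 0)) 0) (max (pw γ α n (v 1)) 0)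
        (max (pw γ α n (v 2)) 0) /
      wedgePoly (numGroups β α n) (max (pw γ α n (v 0)) 0) (max (pw γ α n (v 1)) 0)
        (max (pw γ α n (v 2)) 0) := by
  have h01 : (⟨0, by omega⟩ : Fin n) ≠ ⟨1, by omega⟩ := by simp
  have h02 : (⟨0, by omega⟩ : Fin n) ≠ ⟨2, by omega⟩ := by simp
  have h12 : (⟨1, by omega⟩ : Fin n) ≠ ⟨2, by omega⟩ := by simp
  rw [clusterRatio, dif_pos hn, ← measureReal_def, ← measureReal_def,
    bipLaw_real_triangle _ h01 h02 h12, bipLaw_real_wedge _ h01 h02 h12]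
  simp only [bern_real_true, pw, min_le_right, min_eq_left]

lemma measurable_clusterRatio (α β γ : ℝ) (n : ℕ) :
    Measurable fun v : ℕ → ℝ => clusterRatio α β γ n v := by
  by_cases hn : 3 ≤ n
  · simp only [clusterRatio_eq α β γ hn, trianglePoly, wedgePoly, pw]
    fun_prop
  · simp only [clusterRatio, dif_neg hn]
    exact measurable_const

lemma tendsto_numGroups_one_div {β : ℝ} (hβ : 0 ≤ β) :
    Tendsto (fun n : ℕ => (numGroups β 1 n : ℝ) / n) atTop (𝓝 β) := by
  refine ((tendsto_nat_floor_mul_div_atTop hβ).comp tendsto_natCast_atTop_atTop).congr fun n => ?_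
  simp [numGroups]

lemma tendsto_natCast_mul_max_pw_one {γ w : ℝ} (hγw : 0 ≤ γ * w) :
    Tendsto (fun n : ℕ => (n : ℝ) * max (pw γ 1 n w) 0) atTop (𝓝 (γ * w)) := by
  refine tendsto_const_nhds.congr' ?_
  filter_upwards [eventually_ne_atTop (0 : ℕ),
    tendsto_natCast_atTop_atTop.eventually_ge_atTop (γ * w)] with n hn hwn
  have hn' : (0 : ℝ) < n := by positivity
  have hpw : pw γ 1 n w = γ * w / n := by
    rw [pw, show (-(1 + 1) / 2 : ℝ) = -1 by norm_num, Real.rpow_neg_one, ← div_eq_mul_inv]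
    exact min_eq_left ((div_le_one hn').2 hwn)
  rw [hpw, max_eq_left (by positivity)]
  field_simp

lemma tendsto_clusterRatio_one {β γ : ℝ} (hβ : 0 < β) (hγ : 0 < γ) {v : ℕ → ℝ}
    (hv0 : 0 < v 0) (hv1 : 0 < v 1) (hv2 : 0 < v 2) :
    Tendsto (fun n => clusterRatio 1 β γ n v) atTop (𝓝 (1 + β * γ * v 2)⁻¹) := by
  have hIcc : ∀ l n, max (pw γ 1 n (v l)) 0 ∈ Set.Icc (0 : ℝ) 1 :=
    fun l n => ⟨le_max_right _ _, max_le (min_le_right _ _) zero_le_one⟩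
  have := tendsto_trianglePoly_div_wedgePoly (tendsto_numGroups_one_div hβ.le)
    (hIcc 0) (hIcc 1) (hIcc 2) (tendsto_natCast_mul_max_pw_one (by positivity))
    (tendsto_natCast_mul_max_pw_one (by positivity))
    (tendsto_natCast_mul_max_pw_one (by positivity)) hβ (by positivity) (by positivity)
    (by positivity)
  rw [show γ * v 2 * β = β * γ * v 2 by ring] at this
  refine this.congr' ?_
  filter_upwards [eventually_ge_atTop 3] with n hn
  exact (clusterRatio_eq 1 β γ hn v).symm

theorem clustering_alpha_eq_one_general {Ω : Type*} [MeasurableSpace Ω]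
    (P : Measure Ω) [IsProbabilityMeasure P]
    (β γ : ℝ) (hβ : 0 < β) (hγ : 0 < γ)
    (F : Measure ℝ)
    (hFpos : F (Set.Iic 0) = 0)
    (W : ℕ → Ω → ℝ) (hWmeas : ∀ i, Measurable (W i))
    (hWdist : ∀ i, Measure.map (W i) P = F) :
    ∀ ε : ℝ, 0 < ε →
      Tendsto
        (fun n =>
          P {ω | ε ≤ |clusterRatio 1 β γ n (fun l => W l ω) - (1 + β * γ * W 2 ω)⁻¹|})
        atTop (nhds 0) := by
  have hpos : ∀ l, ∀ᵐ ω ∂P, 0 < W l ω := by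
    intro l
    have : P (W l ⁻¹' Set.Iic 0) = 0 := by
      rw [← Measure.map_apply (hWmeas l) measurableSet_Iic, hWdist, hFpos]
    rw [ae_iff]
    convert this using 2
    ext ω
    simp
  have hlim : ∀ᵐ ω ∂P, Tendsto (fun n => clusterRatio 1 β γ n fun l => W l ω) atTop
      (𝓝 (1 + β * γ * W 2 ω)⁻¹) := by
    filter_upwards [hpos 0, hpos 1, hpos 2] with ω h0 h1 h2
    exact tendsto_clusterRatio_one hβ hγ h0 h1 h2
  have hmeas : ∀ n, AEStronglyMeasurable (fun ω => clusterRatio 1 β γ n fun l => W l ω) P :=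
    fun n => ((measurable_clusterRatio 1 β γ n).comp (measurable_pi_lambda _ hWmeas))
      |>.aestronglyMeasurable
  intro ε hε
  simpa [Real.dist_eq] using
    tendstoInMeasure_iff_dist.mp (tendstoInMeasure_of_tendsto_ae hmeas hlim) ε hε

/-- Theorem 2(b): in the random intersection graph `G(n,m,F)` with `α = 1`, i.e.
`m = ⌊β n⌋`, and `p_i = min(γ W_i n⁻¹, 1)`, if `F` has finite mean, then the conditional
clustering coefficient `c̄_{i,j,k}^{(n)}` converges to `(1 + β γ W_k)⁻¹` in probability
as `n → ∞` (here `k` is the vertex with index `2`). -/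
theorem clustering_alpha_eq_one {Ω : Type*} [MeasurableSpace Ω]
    (P : Measure Ω) [IsProbabilityMeasure P]
    (β γ : ℝ) (hβ : 0 < β) (hγ : 0 < γ)
    (F : Measure ℝ) [IsProbabilityMeasure F]
    (hFpos : F (Set.Iic 0) = 0)
    (hFint : Integrable (fun x => x) F) (hFmean : ∫ x, x ∂F = 1)
    (W : ℕ → Ω → ℝ) (hWmeas : ∀ i, Measurable (W i))
    (hWdist : ∀ i, Measure.map (W i) P = F)
    (hWindep : iIndepFun W P) :
    ∀ ε : ℝ, 0 < ε →
      Tendsto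
        (fun n =>
          P {ω | ε ≤ |clusterRatio 1 β γ n (fun l => W l ω) - (1 + β * γ * W 2 ω)⁻¹|})
        atTop (nhds 0) :=
  clustering_alpha_eq_one_general P β γ hβ hγ F hFpos W hWmeas hWdist
end
end

section
/- Let α = 1, m = ⌊βn⌋, and for i ≥ 2 set p_i' = γ W_i' n^{-1} where W_i' = W_i·1{W_i ≤ n^{1/4}} are truncated i.i.d. weights with E[W_i] = 1, and let N be binomial with parameters m and p_1 = min(γ W_1 n^{-1}, 1) independent of the W_i' given W_1. Then for every t ∈ [0,1], E[e^{(t−1)N Σ_{i=2}^n p_i'} | W_1] → exp(βγW_1(e^{γ(t−1)} − 1)) as n → ∞, the generating function of a compound Poisson distribution: a Poisson(βγW_1) sum of independent Poisson(γ) variables. -/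
open MeasureTheory ProbabilityTheory Filter Real

noncomputable section

/-- The truncated weight `W' = W·1{W ≤ n^{1/4}}`. -/
def trunc (n : ℕ) (x : ℝ) : ℝ := if x ≤ (n : ℝ) ^ ((1 : ℝ) / 4) then x else 0

/-- The generating-function expectation `E[e^{(t-1) N Σ_{i=2}^n p_i'} | W_1 = w]`, where,
conditionally on `W_1 = w`, the variable `N` is binomial with parameters `m = ⌊β n^α⌋`
and `p_1 = min(γ w n^{-(1+α)/2}, 1)`, independent of the i.i.d. weights `W_2, …, W_n`
with law `F`, and `p_i' = γ W_i' n^{-(1+α)/2}` with `W_i' = W_i·1{W_i ≤ n^{1/4}}`. -/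
def genFun (α β γ : ℝ) (F : Measure ℝ) (n : ℕ) (w : ℝ) (t : ℝ) : ℝ :=
  ∫ x : Fin (numGroups β α n + 1) × (Fin (n - 1) → ℝ),
      Real.exp ((t - 1) * ((x.1 : ℕ) : ℝ) *
        ∑ i : Fin (n - 1), γ * trunc n (x.2 i) * (n : ℝ) ^ (-(1 + α) / 2))
    ∂ ((PMF.binomial (Real.toNNReal (pw γ α n w))
          (Real.toNNReal_le_one.mpr (min_le_right _ _)) (numGroups β α n)).toMeasure.prod
        (Measure.pi fun _ : Fin (n - 1) => F))

/-!
Conditionally on `N = k` the exponent is a sum of `n - 1` i.i.d. terms, so the conditional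
expectation is `φₙ(kγ(t-1)/n) ^ (n-1)`, where `φₙ` is the moment generating function of the
truncated weight `W'`. Since `0 ≤ W' ≤ n^{1/4}`, a second-order expansion of the exponential gives
`n (φₙ(c/n) - 1) → c E[W] = c`, hence `φₙ(c/n) ^ (n-1) → e^c`. The Binomial(`⌊βn⌋`, `γw/n`)
probabilities converge to the Poisson(`βγw`) ones and are dominated by `(βγw)^k / k!`, so
Tannery's theorem sums the limits to the Poisson generating function
`exp(βγw(e^{γ(t-1)} - 1))`.
-/

open Topology Asymptotics

-- Mathlib has the next two limits only with exponent, resp. number of trials, equal to `n`;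
-- here they are needed for `⌊βn⌋` trials.
theorem Real.tendsto_one_add_pow_exp_of_tendsto_mul {ι : Type*} {l : Filter ι} {g : ι → ℝ}
    {N : ι → ℕ} {t : ℝ} (hg : Tendsto g l (𝓝 0))
    (hNg : Tendsto (fun i ↦ (N i : ℝ) * g i) l (𝓝 t)) :
    Tendsto (fun i ↦ (1 + g i) ^ N i) l (𝓝 (exp t)) := by
  have hsmall : ∀ᶠ i in l, |g i| < 1 / 2 := by
    simpa using hg.abs.eventually (eventually_lt_nhds (by norm_num : |(0 : ℝ)| < 1 / 2))
  have herr : Tendsto (fun i ↦ (N i : ℝ) * (log (1 + g i) - g i)) l (𝓝 0) := by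
    have hbound : Tendsto (fun i ↦ |(N i : ℝ) * g i| * (|g i| / (1 - |g i|))) l (𝓝 0) := by
      simpa using hNg.abs.mul (hg.abs.div (tendsto_const_nhds.sub hg.abs) (by norm_num))
    refine squeeze_zero_norm' ?_ hbound
    filter_upwards [hsmall] with i hi
    have hlog : |log (1 + g i) - g i| ≤ |g i| ^ 2 / (1 - |g i|) := by
      have h := abs_log_sub_add_sum_range_le (x := -g i) (by rw [abs_neg]; linarith) 1
      norm_num [sub_eq_add_neg, add_comm] at h ⊢
      exact h
    rw [Real.norm_eq_abs, abs_mul, abs_mul, Nat.abs_cast, mul_assoc, mul_div_assoc', ← sq]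
    gcongr
  have hlog : Tendsto (fun i ↦ (N i : ℝ) * log (1 + g i)) l (𝓝 t) := by
    simpa [mul_sub] using hNg.add herr
  refine ((continuous_exp.tendsto t).comp hlog).congr' ?_
  filter_upwards [hsmall] with i hi
  rw [Function.comp_apply, exp_nat_mul, exp_log (by linarith [neg_abs_le (g i)])]

theorem tendsto_choose_mul_pow_of_tendsto_mul {ι : Type*} {l : Filter ι} {M : ι → ℕ}
    {p : ι → ℝ} {r : ℝ} (k : ℕ) (hM : Tendsto M l atTop)
    (hr : Tendsto (fun i ↦ (M i : ℝ) * p i) l (𝓝 r)) :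
    Tendsto (fun i ↦ (M i).choose k * p i ^ k * (1 - p i) ^ (M i - k)) l
      (𝓝 (exp (-r) * r ^ k / k.factorial)) := by
  have hM' : Tendsto (fun i ↦ (M i : ℝ)) l atTop := tendsto_natCast_atTop_atTop.comp hM
  have hp : Tendsto p l (𝓝 0) := by
    refine (by simpa using hr.mul (tendsto_inv_atTop_zero.comp hM') :
      Tendsto (fun i ↦ (M i : ℝ) * p i * (M i : ℝ)⁻¹) l (𝓝 0)).congr' ?_
    filter_upwards [hM'.eventually_ne_atTop 0] with i hi
    field_simp
  have hchoose : Tendsto (fun i ↦ (M i).choose k * p i ^ k) l (𝓝 (r ^ k / k.factorial)) := by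
    have hequiv : (fun i ↦ ((M i).choose k : ℝ) * p i ^ k) ~[l]
        fun i ↦ ((M i : ℝ) * p i) ^ k / k.factorial := by
      refine (((isEquivalent_choose k).comp_tendsto hM).mul IsEquivalent.refl).trans ?_
      refine EventuallyEq.isEquivalent (.of_eq (funext fun i ↦ ?_))
      simp only [Function.comp_apply, Pi.mul_apply]
      ring
    exact hequiv.tendsto_nhds_iff.mpr ((hr.pow k).div_const _)
  have hrest : Tendsto (fun i ↦ (1 - p i) ^ (M i - k)) l (𝓝 (exp (-r))) := by
    simp_rw [sub_eq_add_neg (1 : ℝ)]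
    refine Real.tendsto_one_add_pow_exp_of_tendsto_mul (by simpa using hp.neg) ?_
    refine (by simpa using hr.neg.add (hp.const_mul (k : ℝ)) :
      Tendsto (fun i ↦ -((M i : ℝ) * p i) + k * p i) l (𝓝 (-r))).congr' ?_
    filter_upwards [hM.eventually_ge_atTop k] with i hi
    push_cast [hi]
    ring
  convert hchoose.mul hrest using 2
  ring

theorem choose_mul_pow_mul_one_sub_pow_le {p : ℝ} (hp0 : 0 ≤ p) (hp1 : p ≤ 1) (M k : ℕ) :
    (M.choose k : ℝ) * p ^ k * (1 - p) ^ (M - k) ≤ (M * p) ^ k / k.factorial := by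
  calc (M.choose k : ℝ) * p ^ k * (1 - p) ^ (M - k) ≤ (M ^ k / k.factorial) * p ^ k * 1 := by
        gcongr
        · exact Nat.choose_le_pow_div k M
        · exact pow_le_one₀ (by linarith) (by linarith)
    _ = (M * p) ^ k / k.factorial := by ring

theorem hasSum_poisson_mul_pow (r z : ℝ) :
    HasSum (fun k : ℕ ↦ exp (-r) * r ^ k / k.factorial * z ^ k) (exp (r * (z - 1))) := by
  convert! (NormedSpace.expSeries_div_hasSum_exp (r * z)).mul_left (exp (-r)) using 1
  · ext k
    rw [mul_pow]
    ring
  · rw [← exp_eq_exp_ℝ, ← exp_add]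
    ring_nf

theorem integral_prod_pi_prod_eq_sum_pow {α β : Type*} [Fintype α] [MeasurableSpace α]
    [MeasurableSingletonClass α] [MeasurableSpace β] (P : Measure α) [IsFiniteMeasure P]
    (μ : Measure β) [SigmaFinite μ] {f : α → β → ℝ} (hmeas : ∀ a, Measurable (f a))
    (hint : ∀ a, Integrable (f a) μ) (K : ℕ) :
    ∫ z, ∏ i : Fin K, f z.1 (z.2 i) ∂(P.prod (Measure.pi fun _ ↦ μ))
      = ∑ a, P.real {a} * (∫ x, f a x ∂μ) ^ K := by
  have hmeas' : Measurable fun z : α × (Fin K → β) ↦ ∏ i, f z.1 (z.2 i) :=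
    measurable_from_prod_countable_right fun a ↦
      Finset.measurable_prod _ fun i _ ↦ (hmeas a).comp (measurable_pi_apply i)
  have hint' : Integrable (fun z : α × (Fin K → β) ↦ ∏ i, f z.1 (z.2 i))
      (P.prod (Measure.pi fun _ ↦ μ)) :=
    (integrable_prod_iff hmeas'.aestronglyMeasurable).mpr
      ⟨.of_forall fun a ↦ Integrable.fintype_prod fun _ ↦ hint a, .of_finite⟩
  rw [integral_prod _ hint', integral_fintype .of_finite]
  simp_rw [integral_fintype_prod_eq_pow, Fintype.card_fin, smul_eq_mul]

theorem PMF.binomial_toMeasure_real_singleton {p : ℝ} (hp : 0 ≤ p) (hp1 : p.toNNReal ≤ 1)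
    (m : ℕ) (k : Fin (m + 1)) :
    (PMF.binomial p.toNNReal hp1 m).toMeasure.real {k}
      = m.choose k * p ^ (k : ℕ) * (1 - p) ^ (m - k) := by
  have hp1' : p ≤ 1 := Real.toNNReal_le_one.mp hp1
  rw [measureReal_def, PMF.toMeasure_apply_singleton _ _ (measurableSet_singleton _),
    PMF.binomial_apply, ← ENNReal.coe_one, ← ENNReal.coe_sub]
  simp [Real.coe_toNNReal _ hp, hp1']
  ring

lemma tendsto_rpow_div_natCast {a : ℝ} (ha : a < 1) :
    Tendsto (fun n : ℕ ↦ (n : ℝ) ^ a / n) atTop (𝓝 0) := by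
  refine ((tendsto_rpow_neg_atTop (sub_pos.mpr ha)).comp tendsto_natCast_atTop_atTop).congr' ?_
  filter_upwards [eventually_ge_atTop 1] with n hn
  rw [Function.comp_apply, neg_sub, ← Real.rpow_sub_one (by positivity)]

section Truncation

lemma measurable_trunc (n : ℕ) : Measurable (trunc n) :=
  Measurable.ite (measurableSet_le measurable_id measurable_const) measurable_id measurable_const

lemma trunc_nonneg {n : ℕ} {x : ℝ} (hx : 0 ≤ x) : 0 ≤ trunc n x := by
  unfold trunc; split_ifs <;> simp [hx]

lemma trunc_le_rpow (n : ℕ) (x : ℝ) : trunc n x ≤ (n : ℝ) ^ ((1 : ℝ) / 4) := by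
  unfold trunc; split_ifs with h
  · exact h
  · positivity

lemma abs_trunc_le (n : ℕ) (x : ℝ) : |trunc n x| ≤ |x| := by
  unfold trunc; split_ifs <;> simp

lemma eventually_trunc_eq (x : ℝ) : ∀ᶠ n : ℕ in atTop, trunc n x = x := by
  have hpow : Tendsto (fun n : ℕ ↦ (n : ℝ) ^ ((1 : ℝ) / 4)) atTop atTop :=
    (tendsto_rpow_atTop (by norm_num)).comp tendsto_natCast_atTop_atTop
  filter_upwards [hpow.eventually_ge_atTop x] with n hn
  exact if_pos hn

variable {F : Measure ℝ}

lemma integrable_trunc (hFint : Integrable (fun x ↦ x) F) (n : ℕ) : Integrable (trunc n) F :=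
  hFint.abs.mono' (measurable_trunc n).aestronglyMeasurable (.of_forall (abs_trunc_le n))

lemma tendsto_integral_trunc (hFint : Integrable (fun x ↦ x) F) :
    Tendsto (fun n : ℕ ↦ ∫ x, trunc n x ∂F) atTop (𝓝 (∫ x, x ∂F)) :=
  tendsto_integral_of_dominated_convergence (fun x ↦ |x|)
    (fun n ↦ (measurable_trunc n).aestronglyMeasurable) hFint.abs
    (fun n ↦ .of_forall fun x ↦ abs_trunc_le n x)
    (.of_forall fun x ↦
      tendsto_const_nhds.congr' ((eventually_trunc_eq x).mono fun _ h ↦ h.symm))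

lemma integrable_exp_mul_trunc [IsFiniteMeasure F] (hF : ∀ᵐ x ∂F, 0 ≤ x) (n : ℕ)
    (s : ℝ) :
    Integrable (fun x ↦ exp (s * trunc n x)) F := by
  refine (integrable_const (exp (|s| * (n : ℝ) ^ ((1 : ℝ) / 4)))).mono'
    (measurable_exp.comp ((measurable_trunc n).const_mul s)).aestronglyMeasurable ?_
  filter_upwards [hF] with x hx
  rw [Real.norm_eq_abs, abs_exp, exp_le_exp]
  calc s * trunc n x ≤ |s * trunc n x| := le_abs_self _
    _ = |s| * trunc n x := by rw [abs_mul, abs_of_nonneg (trunc_nonneg hx)]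
    _ ≤ _ := by gcongr; exact trunc_le_rpow n x

variable [IsProbabilityMeasure F]

lemma mgf_trunc_le_one (hF : ∀ᵐ x ∂F, 0 ≤ x) {s : ℝ} (hs : s ≤ 0) (n : ℕ) :
    mgf (trunc n) F s ≤ 1 := by
  refine (integral_mono_ae (integrable_exp_mul_trunc hF n s) (integrable_const 1) ?_).trans_eq
    (by simp)
  filter_upwards [hF] with x hx
  exact exp_le_one_iff.mpr (mul_nonpos_of_nonpos_of_nonneg hs (trunc_nonneg hx))

lemma abs_mgf_trunc_sub_le (hF : ∀ᵐ x ∂F, 0 ≤ x) (hFint : Integrable (fun x ↦ x) F)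
    {n : ℕ} {s : ℝ} (hs : |s| * (n : ℝ) ^ ((1 : ℝ) / 4) ≤ 1) :
    |mgf (trunc n) F s - 1 - s * ∫ x, trunc n x ∂F|
      ≤ s ^ 2 * (n : ℝ) ^ ((1 : ℝ) / 4) * ∫ x, trunc n x ∂F := by
  have htr := integrable_trunc hFint n
  have hexp := integrable_exp_mul_trunc hF n s
  have hexp1 : Integrable (fun x ↦ exp (s * trunc n x) - 1) F := hexp.sub (integrable_const 1)
  have heq : mgf (trunc n) F s - 1 - s * ∫ x, trunc n x ∂F
      = ∫ x, (exp (s * trunc n x) - 1 - s * trunc n x) ∂F := by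
    rw [integral_sub hexp1 (htr.const_mul s), integral_sub hexp (integrable_const 1),
      integral_const_mul, integral_const, probReal_univ, one_smul, mgf]
  rw [heq, ← integral_const_mul, ← Real.norm_eq_abs]
  refine norm_integral_le_of_norm_le (htr.const_mul _) ?_
  filter_upwards [hF] with x hx
  have h0 := trunc_nonneg (n := n) hx
  have h1 := trunc_le_rpow n x
  have hsmall : |s * trunc n x| ≤ 1 := by
    rw [abs_mul, abs_of_nonneg h0]
    exact (mul_le_mul_of_nonneg_left h1 (abs_nonneg s)).trans hs
  calc ‖exp (s * trunc n x) - 1 - s * trunc n x‖ ≤ (s * trunc n x) ^ 2 :=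
        abs_exp_sub_one_sub_id_le hsmall
    _ = s ^ 2 * trunc n x * trunc n x := by ring
    _ ≤ s ^ 2 * (n : ℝ) ^ ((1 : ℝ) / 4) * trunc n x := by gcongr

theorem tendsto_natCast_mul_mgf_trunc_sub_one (hF : ∀ᵐ x ∂F, 0 ≤ x)
    (hFint : Integrable (fun x ↦ x) F) (c : ℝ) :
    Tendsto (fun n : ℕ ↦ (n : ℝ) * (mgf (trunc n) F (c / n) - 1)) atTop
      (𝓝 (c * ∫ x, x ∂F)) := by
  have hratio := tendsto_rpow_div_natCast (a := 1 / 4) (by norm_num)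
  have hsmall : ∀ᶠ n : ℕ in atTop, |c / n| * (n : ℝ) ^ ((1 : ℝ) / 4) ≤ 1 := by
    have h := (hratio.const_mul |c|).eventually (eventually_le_nhds (by norm_num : |c| * 0 < 1))
    filter_upwards [h] with n hn
    rwa [abs_div, Nat.abs_cast, div_mul_eq_mul_div, mul_div_assoc]
  have herr : Tendsto (fun n : ℕ ↦ (n : ℝ) *
      (mgf (trunc n) F (c / n) - 1 - c / n * ∫ x, trunc n x ∂F)) atTop (𝓝 0) := by
    have hbound := (hratio.const_mul (c ^ 2)).mul (tendsto_integral_trunc hFint)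
    rw [mul_zero, zero_mul] at hbound
    refine squeeze_zero_norm' ?_ hbound
    filter_upwards [hsmall, eventually_ne_atTop 0] with n hn hn0
    rw [norm_mul, Real.norm_eq_abs, Nat.abs_cast]
    calc (n : ℝ) * |mgf (trunc n) F (c / n) - 1 - c / n * ∫ x, trunc n x ∂F|
        ≤ n * ((c / n) ^ 2 * (n : ℝ) ^ ((1 : ℝ) / 4) * ∫ x, trunc n x ∂F) := by
          gcongr; exact abs_mgf_trunc_sub_le hF hFint hn
      _ = c ^ 2 * ((n : ℝ) ^ ((1 : ℝ) / 4) / n) * ∫ x, trunc n x ∂F := by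
          field_simp
  have hsum := ((tendsto_integral_trunc hFint).const_mul c).add herr
  rw [add_zero] at hsum
  refine hsum.congr' ?_
  filter_upwards [eventually_ne_atTop 0] with n hn0
  field_simp
  ring

theorem tendsto_mgf_trunc_pow (hF : ∀ᵐ x ∂F, 0 ≤ x) (hFint : Integrable (fun x ↦ x) F)
    (c : ℝ) :
    Tendsto (fun n : ℕ ↦ mgf (trunc n) F (c / n) ^ (n - 1)) atTop
      (𝓝 (exp (c * ∫ x, x ∂F))) := by
  have hlin := tendsto_natCast_mul_mgf_trunc_sub_one hF hFint c
  have hsmall : Tendsto (fun n : ℕ ↦ mgf (trunc n) F (c / n) - 1) atTop (𝓝 0) := by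
    refine (by simpa using hlin.mul tendsto_inv_atTop_nhds_zero_nat :
      Tendsto (fun n : ℕ ↦ (n : ℝ) * (mgf (trunc n) F (c / n) - 1) * (n : ℝ)⁻¹) atTop
        (𝓝 0)).congr' ?_
    filter_upwards [eventually_ne_atTop 0] with n hn0
    field_simp
  have hpred : Tendsto (fun n : ℕ ↦ ((n - 1 : ℕ) : ℝ) * (mgf (trunc n) F (c / n) - 1)) atTop
      (𝓝 (c * ∫ x, x ∂F)) := by
    refine (by simpa using hlin.sub hsmall :
      Tendsto (fun n : ℕ ↦ (n : ℝ) * (mgf (trunc n) F (c / n) - 1)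
        - (mgf (trunc n) F (c / n) - 1)) atTop (𝓝 (c * ∫ x, x ∂F))).congr' ?_
    filter_upwards [eventually_ge_atTop 1] with n hn
    push_cast [hn]
    ring
  simpa using Real.tendsto_one_add_pow_exp_of_tendsto_mul hsmall hpred

end Truncation

lemma numGroups_one (β : ℝ) (n : ℕ) : numGroups β 1 n = ⌊β * n⌋₊ := by
  rw [numGroups, rpow_one]

lemma pw_one (γ : ℝ) (n : ℕ) (w : ℝ) : pw γ 1 n w = min (γ * w / n) 1 := by
  rw [pw, show (-(1 + 1) / 2 : ℝ) = -1 by norm_num, Real.rpow_neg_one, div_eq_mul_inv]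

lemma pw_one_nonneg {γ w : ℝ} (hγw : 0 ≤ γ * w) (n : ℕ) : 0 ≤ pw γ 1 n w := by
  rw [pw_one]
  exact le_min (by positivity) zero_le_one

lemma tendsto_numGroups_one {β : ℝ} (hβ : 0 < β) : Tendsto (numGroups β 1) atTop atTop := by
  rw [funext (numGroups_one β)]
  exact tendsto_nat_floor_mul_atTop β hβ

lemma tendsto_numGroups_one_mul_pw_one {β : ℝ} (hβ : 0 ≤ β) (γ w : ℝ) :
    Tendsto (fun n ↦ (numGroups β 1 n : ℝ) * pw γ 1 n w) atTop (𝓝 (β * γ * w)) := by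
  have hfloor := ((tendsto_nat_floor_mul_div_atTop hβ).comp tendsto_natCast_atTop_atTop).mul_const
    (γ * w)
  rw [← mul_assoc] at hfloor
  refine hfloor.congr' ?_
  have hp : Tendsto (fun n : ℕ ↦ γ * w / n) atTop (𝓝 0) :=
    tendsto_const_nhds.div_atTop tendsto_natCast_atTop_atTop
  filter_upwards [hp.eventually (eventually_le_nhds zero_lt_one)] with n hn
  rw [Function.comp_apply, numGroups_one, pw_one, min_eq_left hn]
  ring

lemma numGroups_one_mul_pw_one_le {β γ w : ℝ} (hβ : 0 ≤ β) (hγw : 0 ≤ γ * w) (n : ℕ) :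
    (numGroups β 1 n : ℝ) * pw γ 1 n w ≤ β * γ * w := by
  rcases n.eq_zero_or_pos with rfl | hn
  · simp [numGroups_one, mul_nonneg hβ hγw, mul_assoc]
  calc (numGroups β 1 n : ℝ) * pw γ 1 n w ≤ (β * n) * (γ * w / n) := by
        rw [numGroups_one, pw_one]
        gcongr
        · exact Nat.floor_le (by positivity)
        · exact min_le_left _ _
    _ = β * γ * w := by field_simp

theorem genFun_one_eq_tsum {β γ w : ℝ} (hγw : 0 ≤ γ * w) {F : Measure ℝ}
    [IsFiniteMeasure F] (hF : ∀ᵐ x ∂F, 0 ≤ x) (n : ℕ) (t : ℝ) :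
    genFun 1 β γ F n w t = ∑' k : ℕ,
      (numGroups β 1 n).choose k * pw γ 1 n w ^ k * (1 - pw γ 1 n w) ^ (numGroups β 1 n - k)
        * mgf (trunc n) F (k * (γ * (t - 1)) / n) ^ (n - 1) := by
  set m := numGroups β 1 n
  have hexp : ∀ (k : ℕ) (y : Fin (n - 1) → ℝ),
      exp ((t - 1) * k * ∑ i, γ * trunc n (y i) * (n : ℝ) ^ (-(1 + 1) / 2 : ℝ))
        = ∏ i, exp (k * (γ * (t - 1)) / n * trunc n (y i)) := by
    intro k y
    rw [← exp_sum, Finset.mul_sum, show (-(1 + 1) / 2 : ℝ) = -1 by norm_num, rpow_neg_one]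
    congr 1
    exact Finset.sum_congr rfl fun i _ ↦ by ring
  rw [genFun]
  simp_rw [hexp]
  rw [integral_prod_pi_prod_eq_sum_pow _ F
      (f := fun (k : Fin (m + 1)) x ↦ exp ((k : ℕ) * (γ * (t - 1)) / n * trunc n x))
      (fun k ↦ measurable_exp.comp ((measurable_trunc n).const_mul _))
      (fun k ↦ integrable_exp_mul_trunc hF n _),
    tsum_eq_sum (s := Finset.range (m + 1)) fun k hk ↦ ?_, ← Fin.sum_univ_eq_sum_range]
  · refine Fintype.sum_congr _ _ fun k ↦ ?_
    rw [PMF.binomial_toMeasure_real_singleton (pw_one_nonneg hγw n)]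
    rfl
  · rw [Finset.mem_range, not_lt] at hk
    rw [Nat.choose_eq_zero_of_lt hk, Nat.cast_zero, zero_mul, zero_mul, zero_mul]

lemma norm_genFun_one_summand_le {β γ w t : ℝ} (hβ : 0 ≤ β) (hγ : 0 ≤ γ) (hw : 0 ≤ w)
    (ht : t ≤ 1) {F : Measure ℝ} [IsProbabilityMeasure F] (hF : ∀ᵐ x ∂F, 0 ≤ x)
    (n k : ℕ) :
    ‖(numGroups β 1 n).choose k * pw γ 1 n w ^ k * (1 - pw γ 1 n w) ^ (numGroups β 1 n - k)
        * mgf (trunc n) F (k * (γ * (t - 1)) / n) ^ (n - 1)‖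
      ≤ (β * γ * w) ^ k / k.factorial := by
  have hγw : 0 ≤ γ * w := mul_nonneg hγ hw
  have hp0 := pw_one_nonneg hγw n
  have hp1 : pw γ 1 n w ≤ 1 := min_le_right _ _
  have hs : k * (γ * (t - 1)) / n ≤ 0 := div_nonpos_of_nonpos_of_nonneg
    (mul_nonpos_of_nonneg_of_nonpos k.cast_nonneg
      (mul_nonpos_of_nonneg_of_nonpos hγ (by linarith))) n.cast_nonneg
  have hmgf0 : 0 ≤ mgf (trunc n) F (k * (γ * (t - 1)) / n) := mgf_nonneg
  have hmgf1 := pow_le_one₀ (n := n - 1) hmgf0 (mgf_trunc_le_one hF hs n)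
  have hmp := numGroups_one_mul_pw_one_le hβ hγw n
  rw [Real.norm_of_nonneg (by have := sub_nonneg.mpr hp1; positivity)]
  calc _ ≤ (numGroups β 1 n).choose k * pw γ 1 n w ^ k
          * (1 - pw γ 1 n w) ^ (numGroups β 1 n - k) * 1 := by gcongr
    _ ≤ ((numGroups β 1 n : ℝ) * pw γ 1 n w) ^ k / k.factorial :=
        (mul_one _).trans_le (choose_mul_pow_mul_one_sub_pow_le hp0 hp1 _ k)
    _ ≤ (β * γ * w) ^ k / k.factorial := by gcongr

/-- For `α = 1` and `m = ⌊β n⌋`: if the weights are i.i.d. with law `F` of mean `1` and,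
conditionally on `W_1 = w`, `N` is binomial with parameters `m` and
`p_1 = min(γ w n⁻¹, 1)`, independent of the truncated weights, then for every
`t ∈ [0,1]`, `E[e^{(t-1) N Σ_{i=2}^n p_i'} | W_1 = w] → exp(βγw(e^{γ(t-1)} - 1))` as
`n → ∞`, the generating function of a compound Poisson distribution: a Poisson(`βγw`)
sum of independent Poisson(`γ`) variables. -/
theorem genFun_limit_alpha_eq_one (β γ : ℝ) (hβ : 0 < β) (hγ : 0 < γ)
    (F : Measure ℝ) [IsProbabilityMeasure F]
    (hFpos : F (Set.Iic 0) = 0)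
    (hFint : Integrable (fun x => x) F) (hFmean : ∫ x, x ∂F = 1) :
    ∀ w : ℝ, 0 < w → ∀ t : ℝ, t ∈ Set.Icc (0 : ℝ) 1 →
      Tendsto (fun n => genFun 1 β γ F n w t) atTop
        (nhds (Real.exp (β * γ * w * (Real.exp (γ * (t - 1)) - 1)))) := by
  intro w hw t ⟨_, ht1⟩
  have hF : ∀ᵐ x ∂F, 0 ≤ x :=
    ae_iff.mpr <| measure_mono_null (fun x hx ↦ (not_le.mp hx).le) hFpos
  simp_rw [genFun_one_eq_tsum (by positivity : 0 ≤ γ * w) hF]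
  rw [← (hasSum_poisson_mul_pow (β * γ * w) (exp (γ * (t - 1)))).tsum_eq]
  refine tendsto_tsum_of_dominated_convergence (Real.summable_pow_div_factorial (β * γ * w))
    (fun k ↦ ?_) (.of_forall (norm_genFun_one_summand_le hβ.le hγ.le hw.le ht1 hF))
  have hmgf := tendsto_mgf_trunc_pow hF hFint (k * (γ * (t - 1)))
  rw [hFmean, mul_one, exp_nat_mul] at hmgf
  exact (tendsto_choose_mul_pow_of_tendsto_mul k (tendsto_numGroups_one hβ)
    (tendsto_numGroups_one_mul_pw_one hβ.le γ w)).mul hmgf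
end
end

section
/- Let λ ≥ 3 be an integer and a > 0 (standing for βγ). Then the clustering c(G) = ((λ−2)^{λ−1}/(λ−1)^{λ−2}) ∫_{(λ−2)/(λ−1)}^∞ (1 + ax)^{-1} x^{-λ} dx admits the closed form c(G) = ((λ−2)^{λ−1}/(λ−1)^{λ−2}) · [ (−a)^{λ−1} ln(1 + (λ−1)/(a(λ−2))) + Σ_{ℓ=1}^{λ−1} ((−a)^{λ−1−ℓ}/ℓ) · ((λ−1)/(λ−2))^ℓ ]. -/
open MeasureTheory Real Finset Filter Topology

/-!
With `n = λ - 1`, the substitution `t = 1/x` turns the integrand into `t ^ n / (t + a)`, and the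
division `t ^ n = (t + a) * ∑_{l=1}^n (-a)^(n-l) t^(l-1) + (-a)^n` gives the primitive
`G t = (-a)^n log (a + t) + ∑_{l=1}^n (-a)^(n-l) t^l / l`. So `x ↦ -G x⁻¹` is a primitive of the
integrand on `(0, ∞)` tending to `-G 0 = -(-a)^n log a`, and the integral over `(x₀, ∞)` is
`G x₀⁻¹ - G 0`. The integrand is nonnegative, so its integrability comes for free.
-/

noncomputable def powDivAddAntideriv (a : ℝ) (n : ℕ) (t : ℝ) : ℝ :=
  (-a) ^ n * log (a + t) + ∑ l ∈ Icc 1 n, (-a) ^ (n - l) / l * t ^ l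

section

variable (a : ℝ) (n : ℕ)

theorem sum_Icc_pow_mul_add_eq (t : ℝ) :
    (∑ l ∈ Icc 1 n, (-a) ^ (n - l) * t ^ (l - 1)) * (t + a) = t ^ n - (-a) ^ n := by
  rw [← Finset.Ico_add_one_right_eq_Icc, sum_Ico_eq_sum_range, Nat.add_sub_cancel,
    ← geom_sum₂_mul, sub_neg_eq_add]
  congr 1
  refine sum_congr rfl fun k _ => ?_
  rw [Nat.add_sub_cancel_left, Nat.sub_sub, mul_comm]

theorem hasDerivAt_powDivAddAntideriv {t : ℝ} (ht : a + t ≠ 0) :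
    HasDerivAt (powDivAddAntideriv a n) (t ^ n / (t + a)) t := by
  have hsum : HasDerivAt (fun t => ∑ l ∈ Icc 1 n, (-a) ^ (n - l) / l * t ^ l)
      (∑ l ∈ Icc 1 n, (-a) ^ (n - l) * t ^ (l - 1)) t := by
    refine HasDerivAt.fun_sum fun l hl => ?_
    have : (l : ℝ) ≠ 0 := by have := (mem_Icc.mp hl).1; positivity
    exact ((hasDerivAt_pow l t).const_mul ((-a) ^ (n - l) / l)).congr_deriv (by field_simp)
  have hlog : HasDerivAt (fun t => (-a) ^ n * log (a + t)) ((-a) ^ n / (a + t)) t := by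
    simpa [div_eq_mul_inv] using (((hasDerivAt_id t).const_add a).log ht).const_mul ((-a) ^ n)
  refine (hlog.add hsum).congr_deriv ?_
  rw [add_comm t a, eq_div_iff ht, add_mul, div_mul_cancel₀ _ ht, ← add_comm t a,
    sum_Icc_pow_mul_add_eq]
  ring

theorem powDivAddAntideriv_zero : powDivAddAntideriv a n 0 = (-a) ^ n * log a := by
  rw [powDivAddAntideriv, add_zero, add_eq_left]
  exact sum_eq_zero fun l hl => by rw [zero_pow (by grind), mul_zero]

theorem hasDerivAt_neg_powDivAddAntideriv_inv (ha : 0 ≤ a) {x : ℝ} (hx : 0 < x) :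
    HasDerivAt (fun x => -powDivAddAntideriv a n x⁻¹) ((1 + a * x)⁻¹ * x ^ (-(n + 1 : ℝ))) x := by
  have hax : a + x⁻¹ ≠ 0 := by positivity
  refine ((hasDerivAt_powDivAddAntideriv a n hax).comp x
    (hasDerivAt_inv hx.ne')).neg.congr_deriv ?_
  rw [rpow_neg hx.le, show (n + 1 : ℝ) = (n + 1 : ℕ) by push_cast; ring, rpow_natCast, inv_pow]
  field_simp
  ring

theorem tendsto_neg_powDivAddAntideriv_inv (ha : 0 < a) :
    Tendsto (fun x => -powDivAddAntideriv a n x⁻¹) atTop (𝓝 (-((-a) ^ n * log a))) := by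
  have hcont : ContinuousAt (powDivAddAntideriv a n) 0 :=
    (hasDerivAt_powDivAddAntideriv a n (by simpa using ha.ne')).continuousAt
  rw [← powDivAddAntideriv_zero]
  exact (hcont.tendsto.comp tendsto_inv_atTop_zero).neg

theorem integral_Ioi_inv_one_add_mul_mul_rpow_neg (ha : 0 < a) {x₀ : ℝ} (hx₀ : 0 < x₀) :
    ∫ x in Set.Ioi x₀, (1 + a * x)⁻¹ * x ^ (-(n + 1 : ℝ)) =
      (-a) ^ n * log (1 + x₀⁻¹ / a) + ∑ l ∈ Icc 1 n, (-a) ^ (n - l) / l * x₀⁻¹ ^ l := by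
  have hpos : ∀ x ∈ Set.Ici x₀, 0 < x := fun x hx => hx₀.trans_le hx
  rw [integral_Ioi_of_hasDerivAt_of_nonneg'
    (fun x hx => hasDerivAt_neg_powDivAddAntideriv_inv a n ha.le (hpos x hx))
    (fun x hx => have := hpos x (Set.mem_Ici_of_Ioi hx); by positivity)
    (tendsto_neg_powDivAddAntideriv_inv a n ha)]
  have hlog : log (1 + x₀⁻¹ / a) = log (a + x₀⁻¹) - log a := by
    rw [← log_div (by positivity) ha.ne', add_div, div_self ha.ne']
  rw [powDivAddAntideriv, hlog]
  ring

end

/-- Let `λ ≥ 3` be an integer and `a > 0` (standing for `βγ`). Then the clustering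
`c(G) = ((λ-2)^{λ-1}/(λ-1)^{λ-2}) ∫_{(λ-2)/(λ-1)}^∞ (1 + ax)⁻¹ x^{-λ} dx` admits the
closed form
`c(G) = ((λ-2)^{λ-1}/(λ-1)^{λ-2}) ·
  [(-a)^{λ-1} ln(1 + (λ-1)/(a(λ-2))) + Σ_{ℓ=1}^{λ-1} ((-a)^{λ-1-ℓ}/ℓ)·((λ-1)/(λ-2))^ℓ]`. -/
theorem pareto_clustering_integer_exponent (lam : ℕ) (hlam : 3 ≤ lam) (a : ℝ)
    (ha : 0 < a) :
    ((lam : ℝ) - 2) ^ (lam - 1) / ((lam : ℝ) - 1) ^ (lam - 2) *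
        ∫ x in Set.Ioi (((lam : ℝ) - 2) / ((lam : ℝ) - 1)),
          (1 + a * x)⁻¹ * x ^ (-(lam : ℝ)) =
      ((lam : ℝ) - 2) ^ (lam - 1) / ((lam : ℝ) - 1) ^ (lam - 2) *
        ((-a) ^ (lam - 1) * Real.log (1 + ((lam : ℝ) - 1) / (a * ((lam : ℝ) - 2))) +
          ∑ l ∈ Finset.Icc 1 (lam - 1),
            (-a) ^ (lam - 1 - l) / (l : ℝ) * (((lam : ℝ) - 1) / ((lam : ℝ) - 2)) ^ l) := by
  obtain ⟨n, rfl⟩ : ∃ n, lam = n + 1 := ⟨lam - 1, by omega⟩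
  have hn : (1 : ℝ) < n := by norm_cast; omega
  rw [Nat.cast_succ, Nat.add_sub_cancel]
  congr 1
  rw [integral_Ioi_inv_one_add_mul_mul_rpow_neg a n ha (div_pos (by linarith) (by linarith)),
    inv_div, div_div, mul_comm _ a]
end
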